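/- arXiv:1503.03658 — 4 statements merged into one kernel-verified Lean document; each statement's English description precedes it below -/
import Mathlib

section
/- For the randomized Collatz chain, set m_n := min(3, d_n) for n ≥ 1. Then for every n ≥ 1 the random variable m_n is independent of the σ-algebra σ(ξ_1, …, ξ_{n-1}), and the sequence (m_n)_{n≥1} is i.i.d. with P(m_n = 1) = 1/2 and P(m_n = 2) = P(m_n = 3) = 1/4. -/
/-!
Write `m_{n+1} = min(3, v₂(3 X_n + ξ_{n+1}))`. This only depends on `3 X_n + ξ_{n+1}` mod 8, and
since `X_n` is odd, `b ↦ 3 X_n + b` maps the odd residues mod 8 bijectively onto the even ones.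
Hence, whatever the value of `X_n`, the uniform digit `ξ_{n+1}` gives `m_{n+1}` the same law
`(1/2, 1/4, 1/4)` on `{1, 2, 3}`. As `X_n` is `σ(ξ_1, …, ξ_n)`-measurable and `ξ_{n+1}` is independent
of that σ-algebra, `m_{n+1}` is independent of it with this law, and since `m_{n+1}` is itself
`σ(ξ_1, …, ξ_{n+1})`-measurable the `m_n` are mutually independent.
-/

open MeasureTheory ProbabilityTheory Finset
open scoped ENNReal

-- Unlike `padicValNat`, the right-hand side can be evaluated by `decide`.
theorem min_padicValNat_eq_card_filter {p N : ℕ} [Fact p.Prime] (hN : N ≠ 0) (k : ℕ) :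
    min k (padicValNat p N) = #{j ∈ range k | p ^ (j + 1) ∣ N % p ^ k} := by
  suffices {j ∈ range k | p ^ (j + 1) ∣ N % p ^ k} = range (min k (padicValNat p N)) by
    rw [this, card_range]
  ext j
  simp only [mem_filter, mem_range, lt_min_iff, and_congr_right_iff]
  intro hj
  rw [Nat.dvd_mod_iff (pow_dvd_pow p hj), padicValNat_dvd_iff_le hN, Nat.succ_le_iff]

theorem odd_div_two_pow_padicValNat {N : ℕ} (hN : N ≠ 0) : Odd (N / 2 ^ padicValNat 2 N) := by
  rw [← Nat.factorization_def N Nat.prime_two, Nat.odd_iff, ← Nat.two_dvd_ne_zero]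
  exact Nat.not_dvd_ordCompl Nat.prime_two hN

theorem MeasureTheory.Measure.map_multiset_sum_dirac {α β : Type*} [MeasurableSpace α]
    [MeasurableSpace β] {f : α → β} (hf : Measurable f) (s : Multiset α) :
    (s.map dirac).sum.map f = ((s.map f).map dirac).sum := by
  induction s using Multiset.induction_on with
  | empty => simp
  | cons a s ih => simp [Measure.map_add _ _ hf, Measure.map_dirac' hf, ih]

namespace ProbabilityTheory

section FreshNoise

variable {Ω β γ δ : Type*} {m mΩ : MeasurableSpace Ω} {μ : Measure Ω}
  [MeasurableSpace β] [Countable β] [MeasurableSingletonClass β] [MeasurableSpace γ]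
  [MeasurableSpace δ] {Y : Ω → β} {Z : Ω → γ} {g : β → γ → δ} {ν : Measure δ}

theorem measure_preimage_inter_eq_mul_of_indep (hm : m ≤ mΩ) (hY : Measurable[m] Y)
    (hZ : Measurable Z) (hg : Measurable (Function.uncurry g))
    (hZm : Indep (MeasurableSpace.comap Z inferInstance) m μ)
    (hlaw : ∀ ω, μ.map (fun ω' => g (Y ω) (Z ω')) = ν) {S : Set δ} (hS : MeasurableSet S)
    {T : Set Ω} (hT : MeasurableSet[m] T) :
    μ ((fun ω => g (Y ω) (Z ω)) ⁻¹' S ∩ T) = ν S * μ T := by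
  have hgy : ∀ y, Measurable (g y) := fun y => hg.comp measurable_prodMk_left
  have hslice : ∀ y, MeasurableSet[m] (Y ⁻¹' {y} ∩ T) := fun y =>
    (hY (measurableSet_singleton y)).inter hT
  have hdisj : Pairwise (Function.onFun Disjoint fun y => Y ⁻¹' {y} ∩ T) := fun y y' hyy' =>
    Set.disjoint_left.mpr fun ω h h' => hyy' (h.1.symm.trans h'.1)
  have hslice_mul : ∀ y,
      μ (Z ⁻¹' (g y ⁻¹' S) ∩ (Y ⁻¹' {y} ∩ T)) = ν S * μ (Y ⁻¹' {y} ∩ T) := by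
    intro y
    rw [(Indep_iff _ _ _).mp hZm _ _ ⟨_, hgy y hS, rfl⟩ (hslice y)]
    obtain hempty | ⟨ω, hωy, -⟩ := (Y ⁻¹' {y} ∩ T).eq_empty_or_nonempty
    · simp [hempty]
    · rw [← hlaw ω, hωy, Measure.map_apply (f := fun ω' => g y (Z ω')) ((hgy y).comp hZ) hS]
      rfl
  calc μ ((fun ω => g (Y ω) (Z ω)) ⁻¹' S ∩ T)
      = μ (⋃ y, Z ⁻¹' (g y ⁻¹' S) ∩ (Y ⁻¹' {y} ∩ T)) := by
        congr 1; ext ω; simp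
    _ = ∑' y, ν S * μ (Y ⁻¹' {y} ∩ T) := by
        rw [measure_iUnion (fun y y' hyy' => (hdisj hyy').mono Set.inter_subset_right
          Set.inter_subset_right) fun y => (hZ (hgy y hS)).inter (hm _ (hslice y))]
        exact tsum_congr hslice_mul
    _ = ν S * μ T := by
        rw [ENNReal.tsum_mul_left, ← measure_iUnion hdisj fun y => hm _ (hslice y),
          ← Set.iUnion_inter, ← Set.preimage_iUnion, Set.iUnion_of_singleton, Set.preimage_univ,
          Set.univ_inter]

variable [IsProbabilityMeasure μ]

theorem map_eq_of_indep_of_map_eq (hm : m ≤ mΩ) (hY : Measurable[m] Y)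
    (hZ : Measurable Z) (hg : Measurable (Function.uncurry g))
    (hZm : Indep (MeasurableSpace.comap Z inferInstance) m μ)
    (hlaw : ∀ ω, μ.map (fun ω' => g (Y ω) (Z ω')) = ν) :
    μ.map (fun ω => g (Y ω) (Z ω)) = ν := by
  have hW : Measurable fun ω => g (Y ω) (Z ω) := hg.comp ((hY.mono hm le_rfl).prodMk hZ)
  ext S hS
  rw [Measure.map_apply hW hS, ← Set.inter_univ (_ ⁻¹' S),
    measure_preimage_inter_eq_mul_of_indep hm hY hZ hg hZm hlaw hS MeasurableSet.univ,
    measure_univ, mul_one]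

theorem indep_comap_of_indep_of_map_eq (hm : m ≤ mΩ) (hY : Measurable[m] Y)
    (hZ : Measurable Z) (hg : Measurable (Function.uncurry g))
    (hZm : Indep (MeasurableSpace.comap Z inferInstance) m μ)
    (hlaw : ∀ ω, μ.map (fun ω' => g (Y ω) (Z ω')) = ν) :
    Indep (MeasurableSpace.comap (fun ω => g (Y ω) (Z ω)) inferInstance) m μ := by
  have hW : Measurable fun ω => g (Y ω) (Z ω) := hg.comp ((hY.mono hm le_rfl).prodMk hZ)
  refine (Indep_iff _ _ _).mpr ?_
  rintro _ T ⟨S, hS, rfl⟩ hT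
  rw [measure_preimage_inter_eq_mul_of_indep hm hY hZ hg hZm hlaw hS hT,
    ← Measure.map_apply hW hS, map_eq_of_indep_of_map_eq hm hY hZ hg hZm hlaw]

end FreshNoise

theorem iIndepFun_of_indep_filtration {Ω : Type*} {mΩ : MeasurableSpace Ω} {μ : Measure Ω}
    [IsProbabilityMeasure μ] {β : ℕ → Type*} [∀ n, MeasurableSpace (β n)] {W : ∀ n, Ω → β n}
    {F : ℕ → MeasurableSpace Ω} (hF : Monotone F) (hW : ∀ n, Measurable[F (n + 1)] (W n))
    (hindep : ∀ n, Indep (MeasurableSpace.comap (W n) inferInstance) (F n) μ) :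
    iIndepFun W μ := by
  rw [iIndepFun_iff_measure_inter_preimage_eq_mul]
  intro s sets hsets
  induction s using Finset.induction_on_max with
  | empty => simp
  | insert j s hmax ih =>
    have hpast : MeasurableSet[F j] (⋂ i ∈ s, W i ⁻¹' sets i) :=
      Finset.measurableSet_biInter s fun i hi =>
        hF (hmax i hi) _ (hW i (hsets i (Finset.mem_insert_of_mem hi)))
    rw [Finset.set_biInter_insert, (Indep_iff _ _ _).mp (hindep j) _ _
      ⟨_, hsets j (Finset.mem_insert_self j s), rfl⟩ hpast,
      ih fun i hi => hsets i (Finset.mem_insert_of_mem hi),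
      Finset.prod_insert fun hj => lt_irrefl j (hmax j hj)]

end ProbabilityTheory

namespace RandomCollatz

variable {Ω : Type*} {mΩ : MeasurableSpace Ω} {μ : Measure Ω}

abbrev history {β : Type*} [MeasurableSpace β] (ξ : ℕ → Ω → β) (k : ℕ) : MeasurableSpace Ω :=
  ⨆ i ∈ Set.Icc 1 k, MeasurableSpace.comap (ξ i) inferInstance

section History

variable {β : Type*} [MeasurableSpace β] {ξ : ℕ → Ω → β}

theorem history_mono : Monotone (history ξ) := fun _ _ hkl =>
  biSup_mono fun _ hi => ⟨hi.1, hi.2.trans hkl⟩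

theorem history_le (hξ : ∀ n, Measurable (ξ n)) (k : ℕ) : history ξ k ≤ mΩ :=
  iSup₂_le fun i _ => (hξ i).comap_le

theorem measurable_history {i k : ℕ} (hi : i ∈ Set.Icc 1 k) : Measurable[history ξ k] (ξ i) :=
  Measurable.of_comap_le (le_iSup₂ (f := fun i (_ : i ∈ Set.Icc 1 k) =>
    MeasurableSpace.comap (ξ i) inferInstance) i hi)

theorem indep_comap_history (hξ : ∀ n, Measurable (ξ n)) (hind : iIndepFun ξ μ) (k : ℕ) :
    Indep (MeasurableSpace.comap (ξ (k + 1)) inferInstance) (history ξ k) μ := by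
  have := indep_iSup_of_disjoint (fun n => (hξ n).comap_le)
    ((iIndepFun_iff_iIndep _ _ _).mp hind) (S := {k + 1}) (T := Set.Icc 1 k) (by simp)
  simpa [history] using this

theorem measurable_history_of_rec {α : Type*} [MeasurableSpace α] {X : ℕ → Ω → α} {x : α}
    {φ : α → β → α} (hφ : Measurable (Function.uncurry φ)) (hX0 : ∀ ω, X 0 ω = x)
    (hXrec : ∀ n ω, X (n + 1) ω = φ (X n ω) (ξ (n + 1) ω)) (n : ℕ) :
    Measurable[history ξ n] (X n) := by
  induction n with
  | zero => simp only [funext hX0, measurable_const]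
  | succ n ih =>
    rw [funext (hXrec n)]
    exact hφ.comp ((ih.mono (history_mono n.le_succ) le_rfl).prodMk
      (measurable_history ⟨Nat.le_add_left 1 n, le_rfl⟩))

end History

def oddDigits : Multiset ℕ := {1, 3, 5, 7}

noncomputable def oddDigitLaw : Measure ℕ := (4⁻¹ : ℝ≥0∞) • (oddDigits.map Measure.dirac).sum

theorem map_eq_oddDigitLaw {Z : Ω → ℕ} (hZ : Measurable Z)
    (hval : ∀ ω, Z ω = 1 ∨ Z ω = 3 ∨ Z ω = 5 ∨ Z ω = 7)
    (hdist : μ {ω | Z ω = 1} = 1/4 ∧ μ {ω | Z ω = 3} = 1/4 ∧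
      μ {ω | Z ω = 5} = 1/4 ∧ μ {ω | Z ω = 7} = 1/4) :
    μ.map Z = oddDigitLaw := by
  refine Measure.ext_of_singleton fun v => ?_
  rw [Measure.map_apply hZ (measurableSet_singleton v)]
  by_cases hv : v = 1 ∨ v = 3 ∨ v = 5 ∨ v = 7
  · rcases hv with rfl | rfl | rfl | rfl <;> simp [oddDigitLaw, oddDigits, Set.preimage, hdist]
  · have hempty : Z ⁻¹' {v} = ∅ := Set.eq_empty_of_forall_notMem fun ω hω => hv (hω ▸ hval ω)
    push Not at hv
    simp [hempty, oddDigitLaw, oddDigits, hv.1.symm, hv.2.1.symm, hv.2.2.1.symm, hv.2.2.2.symm]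

/-- The paper's `m_{n+1}` is `truncVal X_n ξ_{n+1}`. -/
def truncVal (y b : ℕ) : ℕ := min 3 (padicValNat 2 (3 * y + b))

theorem map_truncVal_oddDigits {y : ℕ} (hy : Odd y) :
    oddDigits.map (truncVal y) = {1, 1, 2, 3} := by
  have table : ∀ r ∈ oddDigits, oddDigits.map
      (fun b => #{j ∈ range 3 | 2 ^ (j + 1) ∣ (3 * r + b) % 2 ^ 3}) = {1, 1, 2, 3} := by
    decide
  have hr : y % 8 ∈ oddDigits := by
    obtain ⟨q, rfl⟩ := hy
    simp only [oddDigits, Multiset.insert_eq_cons, Multiset.mem_cons, Multiset.mem_singleton]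
    omega
  rw [← table _ hr]
  refine Multiset.map_congr rfl fun b _ => ?_
  have hmod : (3 * y + b) % 2 ^ 3 = (3 * (y % 8) + b) % 2 ^ 3 := by omega
  rw [truncVal, min_padicValNat_eq_card_filter (by grind) 3, hmod]

noncomputable def truncValLaw : Measure ℕ :=
  (4⁻¹ : ℝ≥0∞) • (({1, 1, 2, 3} : Multiset ℕ).map Measure.dirac).sum

theorem map_truncVal_oddDigitLaw {y : ℕ} (hy : Odd y) :
    oddDigitLaw.map (truncVal y) = truncValLaw := by
  rw [oddDigitLaw, Measure.map_smul, Measure.map_multiset_sum_dirac (measurable_of_countable _),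
    map_truncVal_oddDigits hy, truncValLaw]

theorem map_truncVal_comp {Z : Ω → ℕ} (hZ : Measurable Z)
    (hval : ∀ ω, Z ω = 1 ∨ Z ω = 3 ∨ Z ω = 5 ∨ Z ω = 7)
    (hdist : μ {ω | Z ω = 1} = 1/4 ∧ μ {ω | Z ω = 3} = 1/4 ∧
      μ {ω | Z ω = 5} = 1/4 ∧ μ {ω | Z ω = 7} = 1/4) {y : ℕ} (hy : Odd y) :
    μ.map (fun ω => truncVal y (Z ω)) = truncValLaw := by
  rw [← Function.comp_def, ← Measure.map_map (measurable_of_countable _) hZ,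
    map_eq_oddDigitLaw hZ hval hdist, map_truncVal_oddDigitLaw hy]

theorem measure_eq_of_map_eq_truncValLaw {W : Ω → ℕ} (hW : Measurable W)
    (hlaw : μ.map W = truncValLaw) :
    μ {ω | W ω = 1} = 1 / 2 ∧ μ {ω | W ω = 2} = 1 / 4 ∧ μ {ω | W ω = 3} = 1 / 4 := by
  have hpoint : ∀ v, μ {ω | W ω = v} = truncValLaw {v} := fun v => by
    rw [← hlaw, Measure.map_apply hW (measurableSet_singleton v)]
    rfl
  have hquarters : (4⁻¹ + 4⁻¹ : ℝ≥0∞) = 2⁻¹ := by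
    rw [← two_mul, show (4 : ℝ≥0∞) = 2 * 2 by norm_num, ENNReal.mul_inv (by simp) (by simp),
      ← mul_assoc, ENNReal.mul_inv_cancel (by simp) (by simp), one_mul]
  simp [hpoint, truncValLaw, hquarters]

theorem measurable_truncVal_history {ξ X : ℕ → Ω → ℕ} {n : ℕ}
    (hX : Measurable[history ξ n] (X n)) :
    Measurable[history ξ (n + 1)] fun ω => truncVal (X n ω) (ξ (n + 1) ω) :=
  (measurable_of_countable (Function.uncurry truncVal)).comp
    ((hX.mono (history_mono n.le_succ) le_rfl).prodMk
      (measurable_history ⟨Nat.le_add_left 1 n, le_rfl⟩))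

end RandomCollatz

open RandomCollatz

theorem stmt_4_general
    {Ω : Type*} [MeasurableSpace Ω] (μ : MeasureTheory.Measure Ω)
    [MeasureTheory.IsProbabilityMeasure μ]
    (ξ : ℕ → Ω → ℕ)
    (hξval : ∀ n ω, ξ n ω = 1 ∨ ξ n ω = 3 ∨ ξ n ω = 5 ∨ ξ n ω = 7)
    (hξmeas : ∀ n, Measurable (ξ n))
    (hξindep : ProbabilityTheory.iIndepFun ξ μ)
    (hξdist : ∀ n, μ {ω | ξ n ω = 1} = 1/4 ∧ μ {ω | ξ n ω = 3} = 1/4 ∧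
      μ {ω | ξ n ω = 5} = 1/4 ∧ μ {ω | ξ n ω = 7} = 1/4)
    (x : ℕ) (hx : Odd x)
    (X : ℕ → Ω → ℕ)
    (hX0 : ∀ ω, X 0 ω = x)
    (hXrec : ∀ n ω, X (n + 1) ω =
      (3 * X n ω + ξ (n + 1) ω) / 2 ^ padicValNat 2 (3 * X n ω + ξ (n + 1) ω))
    (d : ℕ → Ω → ℕ)
    (hd : ∀ n ω, d (n + 1) ω = padicValNat 2 (3 * X n ω + ξ (n + 1) ω)) :
    (∀ n, 1 ≤ n →
      ProbabilityTheory.Indep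
        (MeasurableSpace.comap (fun ω => min 3 (d n ω)) inferInstance)
        (⨆ i ∈ Set.Icc 1 (n - 1), MeasurableSpace.comap (ξ i) inferInstance) μ) ∧
    ProbabilityTheory.iIndepFun
      (fun n ω => min 3 (d (n + 1) ω)) μ ∧
    (∀ n, 1 ≤ n → μ {ω | min 3 (d n ω) = 1} = 1/2 ∧
      μ {ω | min 3 (d n ω) = 2} = 1/4 ∧ μ {ω | min 3 (d n ω) = 3} = 1/4) := by
  have hodd : ∀ n ω, Odd (X n ω)
    | 0, ω => hX0 ω ▸ hx
    | n + 1, ω => hXrec n ω ▸ odd_div_two_pow_padicValNat (by have := hξval (n + 1) ω; omega)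
  have hX := measurable_history_of_rec
    (φ := fun y b => (3 * y + b) / 2 ^ padicValNat 2 (3 * y + b)) (measurable_of_countable _)
    hX0 hXrec
  have hm : ∀ n, (fun ω => min 3 (d (n + 1) ω)) = fun ω => truncVal (X n ω) (ξ (n + 1) ω) :=
    fun n => funext fun ω => by rw [hd, truncVal]
  have hmeas : ∀ n, Measurable[history ξ (n + 1)] fun ω => min 3 (d (n + 1) ω) :=
    fun n => hm n ▸ measurable_truncVal_history (hX n)
  have hlaw : ∀ n ω, μ.map (fun ω' => truncVal (X n ω) (ξ (n + 1) ω')) = truncValLaw :=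
    fun n ω => map_truncVal_comp (hξmeas _) (hξval _) (hξdist _) (hodd n ω)
  have hpast := indep_comap_history hξmeas hξindep
  have hindep : ∀ n, Indep (MeasurableSpace.comap (fun ω => min 3 (d (n + 1) ω)) inferInstance)
      (history ξ n) μ := fun n => hm n ▸ indep_comap_of_indep_of_map_eq (history_le hξmeas n)
        (hX n) (hξmeas _) (measurable_of_countable _) (hpast n) (hlaw n)
  have hmap : ∀ n, μ.map (fun ω => min 3 (d (n + 1) ω)) = truncValLaw := fun n => hm n ▸
    map_eq_of_indep_of_map_eq (history_le hξmeas n) (hX n) (hξmeas _)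
      (measurable_of_countable _) (hpast n) (hlaw n)
  refine ⟨fun n hn => ?_, iIndepFun_of_indep_filtration history_mono hmeas hindep, fun n hn => ?_⟩
    <;> obtain ⟨n, rfl⟩ := Nat.exists_eq_add_of_le' hn
  · exact hindep n
  · exact measure_eq_of_map_eq_truncValLaw ((hmeas n).mono (history_le hξmeas _) le_rfl) (hmap n)

/-- For the randomized Collatz chain, with `m n := min 3 (d n)` for `n ≥ 1`: each `m n`
is independent of `σ(ξ 1, …, ξ (n-1))`, and the sequence `(m n)` (for `n ≥ 1`) is i.i.d.
with `P(m n = 1) = 1/2` and `P(m n = 2) = P(m n = 3) = 1/4`. -/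
theorem stmt_4
    {Ω : Type*} [MeasurableSpace Ω] (μ : MeasureTheory.Measure Ω)
    [MeasureTheory.IsProbabilityMeasure μ]
    (ξ : ℕ → Ω → ℕ)
    (hξval : ∀ n ω, ξ n ω = 1 ∨ ξ n ω = 3 ∨ ξ n ω = 5 ∨ ξ n ω = 7)
    (hξmeas : ∀ n, Measurable (ξ n))
    (hξindep : ProbabilityTheory.iIndepFun ξ μ)
    (hξdist : ∀ n, μ {ω | ξ n ω = 1} = 1/4 ∧ μ {ω | ξ n ω = 3} = 1/4 ∧
      μ {ω | ξ n ω = 5} = 1/4 ∧ μ {ω | ξ n ω = 7} = 1/4)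
    (x : ℕ) (hx : Odd x) (hxpos : 0 < x)
    (X : ℕ → Ω → ℕ)
    (hX0 : ∀ ω, X 0 ω = x)
    (hXrec : ∀ n ω, X (n + 1) ω =
      (3 * X n ω + ξ (n + 1) ω) / 2 ^ padicValNat 2 (3 * X n ω + ξ (n + 1) ω))
    (d : ℕ → Ω → ℕ)
    (hd : ∀ n ω, d (n + 1) ω = padicValNat 2 (3 * X n ω + ξ (n + 1) ω)) :
    (∀ n, 1 ≤ n →
      ProbabilityTheory.Indep
        (MeasurableSpace.comap (fun ω => min 3 (d n ω)) inferInstance)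
        (⨆ i ∈ Set.Icc 1 (n - 1), MeasurableSpace.comap (ξ i) inferInstance) μ) ∧
    ProbabilityTheory.iIndepFun
      (fun n ω => min 3 (d (n + 1) ω)) μ ∧
    (∀ n, 1 ≤ n → μ {ω | min 3 (d n ω) = 1} = 1/2 ∧
      μ {ω | min 3 (d n ω) = 2} = 1/4 ∧ μ {ω | min 3 (d n ω) = 3} = 1/4) :=
  stmt_4_general μ ξ hξval hξmeas hξindep hξdist x hx X hX0 hXrec d hd
end

section
/- (Proposition 1) For the randomized Collatz chain started at any positive odd integer x, almost surely limsup_{n→∞} X_n = ∞. -/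
/-!
Call step `n → n + 1` rising when `3 Xₙ + ξₙ₊₁ ≡ 2 (mod 4)`: then `dₙ₊₁ = 1` and
`Xₙ₊₁ = (3 Xₙ + ξₙ₊₁) / 2 ≥ Xₙ + 1`. Since `Xₙ` is odd, the step rises exactly when
`ξₙ₊₁ ≡ -Xₙ (mod 4)`, and `ξₙ₊₁ mod 4` is uniform on `{1, 3}` and independent of the past, so
every step rises with conditional probability `1/2`. A block of `L` consecutive steps is then
entirely rising with conditional probability `2⁻ᴸ`, so the probability that none of `j` successive
blocks rises is `(1 - 2⁻ᴸ)ʲ → 0`. Hence almost surely, for every `L`, rising blocks of length `L`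
occur arbitrarily late, and at the end of each `X ≥ L`.
-/

open MeasureTheory ProbabilityTheory Filter
open scoped ENNReal

namespace RandomCollatz

variable {Ω : Type*}

theorem odd_div_two_pow_padicValNat {y : ℕ} (hy : y ≠ 0) : Odd (y / 2 ^ padicValNat 2 y) := by
  have := Nat.not_dvd_ordCompl Nat.prime_two hy
  rw [Nat.factorization_def y Nat.prime_two] at this
  exact Nat.odd_iff.mpr (by omega)

theorem padicValNat_two_of_mod_four_eq_two {y : ℕ} (hy : y % 4 = 2) : padicValNat 2 y = 1 := by
  rw [show y = 2 * (y / 2) by omega, padicValNat.mul two_ne_zero (by omega),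
    padicValNat.self one_lt_two, padicValNat.eq_zero_of_not_dvd (by omega)]

def step (m e : ℕ) : ℕ := (3 * m + e) / 2 ^ padicValNat 2 (3 * m + e)

theorem odd_step {m e : ℕ} (he : 0 < e) : Odd (step m e) :=
  odd_div_two_pow_padicValNat (by omega)

theorem lt_step {m e : ℕ} (hm : 0 < m) (h : (3 * m + e) % 4 = 2) : m < step m e := by
  rw [step, padicValNat_two_of_mod_four_eq_two h, pow_one]
  omega

theorem limsup_natCast_eq_top {ι : Type*} {f : Filter ι} {u : ι → ℕ}
    (h : ∀ L : ℕ, ∃ᶠ i in f, L ≤ u i) : limsup (fun i => (u i : ℝ≥0∞)) f = ⊤ :=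
  eq_top_iff.2 <| ENNReal.iSup_natCast ▸ iSup_le fun L =>
    le_limsup_of_frequently_le <| (h L).mono fun _ hi => by exact_mod_cast hi

section Distribution

variable [MeasurableSpace Ω] {μ : Measure Ω}

theorem measure_mod_four_eq_inv_two {f : Ω → ℕ} (hf : Measurable f)
    (hval : ∀ ω, f ω = 1 ∨ f ω = 3 ∨ f ω = 5 ∨ f ω = 7)
    (hdist : μ {ω | f ω = 1} = 1/4 ∧ μ {ω | f ω = 3} = 1/4 ∧
      μ {ω | f ω = 5} = 1/4 ∧ μ {ω | f ω = 7} = 1/4) {r : ℕ} (hr : r = 1 ∨ r = 3) :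
    μ {ω | f ω % 4 = r} = 2⁻¹ := by
  have hunion : {ω | f ω % 4 = r} = {ω | f ω = r} ∪ {ω | f ω = r + 4} := by
    ext ω
    have := hval ω
    simp only [Set.mem_union, Set.mem_ofPred_eq]
    omega
  have hdisj : Disjoint {ω | f ω = r} {ω | f ω = r + 4} :=
    Set.disjoint_left.2 fun ω h1 h2 => by simp only [Set.mem_ofPred_eq] at h1 h2; omega
  rw [hunion, measure_union hdisj (hf (measurableSet_singleton _))]
  have hquarter : (1 / 4 : ℝ≥0∞) + 1 / 4 = 2⁻¹ := by
    rw [← ENNReal.toReal_eq_toReal_iff' (by simp) (by simp)]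
    norm_num [ENNReal.toReal_add]
  obtain ⟨h1, h3, h5, h7⟩ := hdist
  rcases hr with rfl | rfl
  · rw [h1, h5, hquarter]
  · rw [h3, h7, hquarter]

theorem indep_natural_comap_of_lt {ξ : ℕ → Ω → ℕ} (hξmeas : ∀ n, Measurable (ξ n))
    (hindep : iIndepFun ξ μ) {n k : ℕ} (hnk : n < k) :
    Indep (Filtration.natural ξ (fun n => (hξmeas n).stronglyMeasurable) n)
      (.comap (ξ k) inferInstance) μ := by
  have := indep_iSup_of_disjoint (fun i => (hξmeas i).comap_le) hindep.iIndep
    (S := Set.Iic n) (T := {k}) (by simpa using hnk)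
  rwa [iSup_singleton] at this

end Distribution

variable {ξ X : ℕ → Ω → ℕ}

/-- On this event `d (n + 1) = 1`, hence `X (n + 1) = (3 X n + ξ (n + 1)) / 2 > X n`. -/
def risingStep (X ξ : ℕ → Ω → ℕ) (n : ℕ) : Set Ω :=
  {ω | (3 * X n ω + ξ (n + 1) ω) % 4 = 2}

def risingRun (X ξ : ℕ → Ω → ℕ) (a t : ℕ) : Set Ω :=
  {ω | ∀ j < t, ω ∈ risingStep X ξ (a + j)}

theorem risingRun_succ (a t : ℕ) :
    risingRun X ξ a (t + 1) = risingRun X ξ a t ∩ risingStep X ξ (a + t) := by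
  ext ω
  exact Nat.forall_lt_succ_right

theorem odd_of_step_recursion (hXrec : ∀ n ω, X (n + 1) ω = step (X n ω) (ξ (n + 1) ω))
    (hX0 : ∀ ω, Odd (X 0 ω)) (hξ : ∀ n ω, 0 < ξ n ω) (n : ℕ) (ω : Ω) : Odd (X n ω) := by
  cases n with
  | zero => exact hX0 ω
  | succ n => exact hXrec n ω ▸ odd_step (hξ _ ω)

theorem add_le_of_mem_risingRun (hXrec : ∀ n ω, X (n + 1) ω = step (X n ω) (ξ (n + 1) ω))
    (hXodd : ∀ n ω, Odd (X n ω)) {a t : ℕ} {ω : Ω} (h : ω ∈ risingRun X ξ a t) :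
    X a ω + t ≤ X (a + t) ω := by
  induction t with
  | zero => rfl
  | succ t ih =>
    rw [risingRun_succ] at h
    have hrise : X (a + t) ω < X (a + t + 1) ω := hXrec _ ω ▸ lt_step (hXodd (a + t) ω).pos h.2
    have := ih h.1
    show X a ω + (t + 1) ≤ X (a + t + 1) ω
    omega

theorem frequently_le_of_forall_exists_mem_risingRun
    (hXrec : ∀ n ω, X (n + 1) ω = step (X n ω) (ξ (n + 1) ω)) (hXodd : ∀ n ω, Odd (X n ω))
    {ω : Ω} (h : ∀ L a, ∃ k, ω ∈ risingRun X ξ (a + k * L) L) (L : ℕ) :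
    ∃ᶠ n in atTop, L ≤ X n ω := by
  refine frequently_atTop.2 fun a => ?_
  obtain ⟨k, hk⟩ := h L a
  exact ⟨a + k * L + L, by omega, le_add_self.trans (add_le_of_mem_risingRun hXrec hXodd hk)⟩

section Probability

variable {m : MeasurableSpace Ω} {μ : Measure Ω} {ℱ : Filtration ℕ m}

theorem measurableSet_risingStep (hX : ∀ n, Measurable[ℱ n] (X n))
    (hξ : ∀ n, Measurable[ℱ n] (ξ n)) (n : ℕ) : MeasurableSet[ℱ (n + 1)] (risingStep X ξ n) :=
  (((hX n).mono (ℱ.mono n.le_succ) le_rfl).prodMk (hξ (n + 1)))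
    (.of_discrete (s := {p : ℕ × ℕ | (3 * p.1 + p.2) % 4 = 2}))

theorem measurableSet_risingRun (hX : ∀ n, Measurable[ℱ n] (X n))
    (hξ : ∀ n, Measurable[ℱ n] (ξ n)) (a t : ℕ) : MeasurableSet[ℱ (a + t)] (risingRun X ξ a t) := by
  induction t with
  | zero => simp [risingRun]
  | succ t ih =>
    rw [risingRun_succ]
    exact (ℱ.mono (a + t).le_succ _ ih).inter (measurableSet_risingStep hX hξ (a + t))

theorem measurable_of_step_recursion (hXrec : ∀ n ω, X (n + 1) ω = step (X n ω) (ξ (n + 1) ω))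
    (hX0 : Measurable[ℱ 0] (X 0)) (hξ : ∀ n, Measurable[ℱ n] (ξ n)) (n : ℕ) :
    Measurable[ℱ n] (X n) := by
  induction n with
  | zero => exact hX0
  | succ n ih =>
    rw [show X (n + 1) = fun ω => step (X n ω) (ξ (n + 1) ω) from funext (hXrec n)]
    exact (Measurable.of_discrete (f := fun p : ℕ × ℕ => step p.1 p.2)).comp
      ((ih.mono (ℱ.mono n.le_succ) le_rfl).prodMk (hξ (n + 1)))

theorem measure_inter_mod_four_eq
    (hindep : ∀ n, Indep (ℱ n) (.comap (ξ (n + 1)) inferInstance) μ)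
    (hξmod : ∀ n r, (r = 1 ∨ r = 3) → μ {ω | ξ n ω % 4 = r} = 2⁻¹) {n r : ℕ}
    (hr : r = 1 ∨ r = 3) {E : Set Ω} (hE : MeasurableSet[ℱ n] E) :
    μ (E ∩ {ω | ξ (n + 1) ω % 4 = r}) = μ E * 2⁻¹ := by
  rw [(Indep_iff _ _ μ).1 (hindep n) E {ω | ξ (n + 1) ω % 4 = r} hE
    ⟨{k | k % 4 = r}, trivial, rfl⟩, hξmod _ _ hr]

/-- For odd `X n` the step rises iff `ξ (n + 1) ≡ -X n [MOD 4]`: exactly one of the two equally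
likely residues of `ξ (n + 1)`. -/
theorem measure_inter_risingStep (hX : ∀ n, Measurable[ℱ n] (X n)) (hXodd : ∀ n ω, Odd (X n ω))
    (hindep : ∀ n, Indep (ℱ n) (.comap (ξ (n + 1)) inferInstance) μ)
    (hξmod : ∀ n r, (r = 1 ∨ r = 3) → μ {ω | ξ n ω % 4 = r} = 2⁻¹)
    {n : ℕ} {E : Set Ω} (hE : MeasurableSet[ℱ n] E) :
    μ (E ∩ risingStep X ξ n) = μ E * 2⁻¹ := by
  set A := {ω | X n ω % 4 = 1}
  have hA : MeasurableSet[ℱ n] A := hX n (MeasurableSet.of_discrete (s := {k | k % 4 = 1}))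
  have h1 : E ∩ risingStep X ξ n ∩ A = E ∩ A ∩ {ω | ξ (n + 1) ω % 4 = 3} := by
    ext ω
    have := Nat.odd_iff.1 (hXodd n ω)
    simp only [Set.mem_inter_iff, Set.mem_ofPred_eq, risingStep, A]
    grind
  have h3 : (E ∩ risingStep X ξ n) \ A = (E \ A) ∩ {ω | ξ (n + 1) ω % 4 = 1} := by
    ext ω
    have := Nat.odd_iff.1 (hXodd n ω)
    simp only [Set.mem_inter_iff, Set.mem_sdiff, Set.mem_ofPred_eq, risingStep, A]
    grind
  rw [← measure_inter_add_sdiff _ (ℱ.le n _ hA), h1, h3,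
    measure_inter_mod_four_eq hindep hξmod (.inr rfl) (hE.inter hA),
    measure_inter_mod_four_eq hindep hξmod (.inl rfl) (hE.diff hA), ← add_mul,
    measure_inter_add_sdiff _ (ℱ.le n _ hA)]

theorem measure_inter_risingRun (hX : ∀ n, Measurable[ℱ n] (X n)) (hXodd : ∀ n ω, Odd (X n ω))
    (hξ : ∀ n, Measurable[ℱ n] (ξ n))
    (hindep : ∀ n, Indep (ℱ n) (.comap (ξ (n + 1)) inferInstance) μ)
    (hξmod : ∀ n r, (r = 1 ∨ r = 3) → μ {ω | ξ n ω % 4 = r} = 2⁻¹)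
    {a : ℕ} {E : Set Ω} (hE : MeasurableSet[ℱ a] E) (t : ℕ) :
    μ (E ∩ risingRun X ξ a t) = μ E * 2⁻¹ ^ t := by
  induction t with
  | zero => simp [risingRun]
  | succ t ih =>
    have hEt : MeasurableSet[ℱ (a + t)] (E ∩ risingRun X ξ a t) :=
      (ℱ.mono (Nat.le_add_right a t) _ hE).inter (measurableSet_risingRun hX hξ a t)
    rw [risingRun_succ, ← Set.inter_assoc, measure_inter_risingStep hX hXodd hindep hξmod hEt, ih,
      pow_succ, mul_assoc]

def noRisingBlock (X ξ : ℕ → Ω → ℕ) (a L j : ℕ) : Set Ω :=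
  {ω | ∀ k < j, ω ∉ risingRun X ξ (a + k * L) L}

theorem noRisingBlock_succ (a L j : ℕ) :
    noRisingBlock X ξ a L (j + 1) = noRisingBlock X ξ a L j \ risingRun X ξ (a + j * L) L := by
  ext ω
  exact Nat.forall_lt_succ_right

theorem measurableSet_noRisingBlock (hX : ∀ n, Measurable[ℱ n] (X n))
    (hξ : ∀ n, Measurable[ℱ n] (ξ n)) (a L j : ℕ) :
    MeasurableSet[ℱ (a + j * L)] (noRisingBlock X ξ a L j) := by
  induction j with
  | zero => simp [noRisingBlock]
  | succ j ih =>
    rw [noRisingBlock_succ, show a + (j + 1) * L = a + j * L + L by ring]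
    exact (ℱ.mono (Nat.le_add_right _ L) _ ih).diff (measurableSet_risingRun hX hξ _ L)

theorem measure_noRisingBlock [IsProbabilityMeasure μ] (hX : ∀ n, Measurable[ℱ n] (X n))
    (hXodd : ∀ n ω, Odd (X n ω)) (hξ : ∀ n, Measurable[ℱ n] (ξ n))
    (hindep : ∀ n, Indep (ℱ n) (.comap (ξ (n + 1)) inferInstance) μ)
    (hξmod : ∀ n r, (r = 1 ∨ r = 3) → μ {ω | ξ n ω % 4 = r} = 2⁻¹) (a L j : ℕ) :
    μ (noRisingBlock X ξ a L j) = (1 - 2⁻¹ ^ L) ^ j := by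
  induction j with
  | zero => simp [noRisingBlock]
  | succ j ih =>
    have hsplit := measure_inter_add_sdiff (μ := μ) (noRisingBlock X ξ a L j)
      (ℱ.le _ _ (measurableSet_risingRun hX hξ (a + j * L) L))
    rw [measure_inter_risingRun hX hXodd hξ hindep hξmod
      (measurableSet_noRisingBlock hX hξ a L j), ih] at hsplit
    rw [noRisingBlock_succ, ENNReal.eq_sub_of_add_eq' (by simp) ((add_comm _ _).trans hsplit),
      pow_succ, ENNReal.mul_sub (by simp), mul_one]

theorem ae_exists_mem_risingRun [IsProbabilityMeasure μ] (hX : ∀ n, Measurable[ℱ n] (X n))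
    (hXodd : ∀ n ω, Odd (X n ω)) (hξ : ∀ n, Measurable[ℱ n] (ξ n))
    (hindep : ∀ n, Indep (ℱ n) (.comap (ξ (n + 1)) inferInstance) μ)
    (hξmod : ∀ n r, (r = 1 ∨ r = 3) → μ {ω | ξ n ω % 4 = r} = 2⁻¹) (a L : ℕ) :
    ∀ᵐ ω ∂μ, ∃ k, ω ∈ risingRun X ξ (a + k * L) L := by
  have hlt : 1 - 2⁻¹ ^ L < (1 : ℝ≥0∞) := ENNReal.sub_lt_self (by simp) (by simp) (by simp)
  refine ae_iff.2 (le_antisymm (ge_of_tendsto'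
    (ENNReal.tendsto_pow_atTop_nhds_zero_of_lt_one hlt) fun j => ?_) zero_le)
  rw [← measure_noRisingBlock hX hXodd hξ hindep hξmod a L j]
  exact measure_mono fun ω hω k _ hk => hω ⟨k, hk⟩

end Probability

end RandomCollatz

open RandomCollatz

theorem stmt_7_general
    {Ω : Type*} [MeasurableSpace Ω] (μ : MeasureTheory.Measure Ω)
    [MeasureTheory.IsProbabilityMeasure μ]
    (ξ : ℕ → Ω → ℕ)
    (hξval : ∀ n ω, ξ n ω = 1 ∨ ξ n ω = 3 ∨ ξ n ω = 5 ∨ ξ n ω = 7)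
    (hξmeas : ∀ n, Measurable (ξ n))
    (hξindep : ProbabilityTheory.iIndepFun ξ μ)
    (hξdist : ∀ n, μ {ω | ξ n ω = 1} = 1/4 ∧ μ {ω | ξ n ω = 3} = 1/4 ∧
      μ {ω | ξ n ω = 5} = 1/4 ∧ μ {ω | ξ n ω = 7} = 1/4)
    (x : ℕ) (hx : Odd x)
    (X : ℕ → Ω → ℕ)
    (hX0 : ∀ ω, X 0 ω = x)
    (hXrec : ∀ n ω, X (n + 1) ω =
      (3 * X n ω + ξ (n + 1) ω) / 2 ^ padicValNat 2 (3 * X n ω + ξ (n + 1) ω)) :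
    ∀ᵐ ω ∂μ, Filter.limsup (fun n => (X n ω : ENNReal)) Filter.atTop = ⊤ := by
  set ℱ := Filtration.natural ξ fun n => (hξmeas n).stronglyMeasurable
  have hξℱ (n : ℕ) : Measurable[ℱ n] (ξ n) :=
    (Filtration.stronglyAdapted_natural (β := fun _ => ℕ) _ n).measurable
  have hXodd := odd_of_step_recursion hXrec (fun ω => hX0 ω ▸ hx)
    fun n ω => by rcases hξval n ω with h | h | h | h <;> omega
  have hXℱ := measurable_of_step_recursion (ℱ := ℱ) hXrec
    ((funext hX0 : X 0 = fun _ => x) ▸ measurable_const) hξℱ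
  have hindep (n : ℕ) := indep_natural_comap_of_lt hξmeas hξindep n.lt_succ_self
  have hξmod (n r : ℕ) (hr : r = 1 ∨ r = 3) :=
    measure_mod_four_eq_inv_two (hξmeas n) (hξval n) (hξdist n) hr
  have hruns : ∀ᵐ ω ∂μ, ∀ L a, ∃ k, ω ∈ risingRun X ξ (a + k * L) L :=
    ae_all_iff.2 fun L => ae_all_iff.2 fun a =>
      ae_exists_mem_risingRun hXℱ hXodd hξℱ hindep hξmod a L
  filter_upwards [hruns] with ω hω
  exact limsup_natCast_eq_top (frequently_le_of_forall_exists_mem_risingRun hXrec hXodd hω)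

/-- (Proposition 1) For the randomized Collatz chain started at any positive odd integer
`x`, almost surely `limsup Xₙ = ∞`. -/
theorem stmt_7
    {Ω : Type*} [MeasurableSpace Ω] (μ : MeasureTheory.Measure Ω)
    [MeasureTheory.IsProbabilityMeasure μ]
    (ξ : ℕ → Ω → ℕ)
    (hξval : ∀ n ω, ξ n ω = 1 ∨ ξ n ω = 3 ∨ ξ n ω = 5 ∨ ξ n ω = 7)
    (hξmeas : ∀ n, Measurable (ξ n))
    (hξindep : ProbabilityTheory.iIndepFun ξ μ)
    (hξdist : ∀ n, μ {ω | ξ n ω = 1} = 1/4 ∧ μ {ω | ξ n ω = 3} = 1/4 ∧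
      μ {ω | ξ n ω = 5} = 1/4 ∧ μ {ω | ξ n ω = 7} = 1/4)
    (x : ℕ) (hx : Odd x) (hxpos : 0 < x)
    (X : ℕ → Ω → ℕ)
    (hX0 : ∀ ω, X 0 ω = x)
    (hXrec : ∀ n ω, X (n + 1) ω =
      (3 * X n ω + ξ (n + 1) ω) / 2 ^ padicValNat 2 (3 * X n ω + ξ (n + 1) ω))
    (d : ℕ → Ω → ℕ)
    (hd : ∀ n ω, d (n + 1) ω = padicValNat 2 (3 * X n ω + ξ (n + 1) ω)) :
    ∀ᵐ ω ∂μ, Filter.limsup (fun n => (X n ω : ENNReal)) Filter.atTop = ⊤ :=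
  stmt_7_general μ ξ hξval hξmeas hξindep hξdist x hx X hX0 hXrec
end

section
/- For the randomized Collatz chain started at any positive odd integer x, let M > 1 be fixed and let N_1 := inf{ n ≥ 0 : ln X_n ≥ M }. Then there exists α_0 > 0 such that E[e^{α N_1}] < ∞ for all α < α_0; in particular N_1 < ∞ almost surely and E[N_1] < ∞. -/
/-!
Call step `n` *good* when `3 Xₙ + ξₙ₊₁ ≡ 2 (mod 4)`: then only one factor `2` is removed, so
`Xₙ₊₁ ≥ (3/2) Xₙ`. Since `Xₙ` is odd, the step is good exactly when `ξₙ₊₁ ≡ Xₙ + 2 (mod 4)`, and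
`ξₙ₊₁ mod 4` is a fair coin on `{1, 3}` independent of the past, so every step is good with
probability `1/2` whatever happened before. A run of `k ≥ M / log (3/2)` good steps lifts `log X`
above `M` from any odd starting value. Cutting time into blocks of length `k`, the blocks are
independent trials succeeding with probability `2⁻ᵏ`, hence `P(N₁ > m k) ≤ (1 - 2⁻ᵏ)ᵐ`. This
geometric tail gives `E[e^{α N₁}] < ∞` for `α < log (1 / (1 - 2⁻ᵏ)) / k`, and with it `N₁ < ∞`
a.s. and `E[N₁] < ∞`.
-/

open MeasureTheory ProbabilityTheory Real
open scoped ENNReal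

def collatzStep (a b : ℕ) : ℕ := (3 * a + b) / 2 ^ padicValNat 2 (3 * a + b)

theorem odd_collatzStep {a b : ℕ} (h : 3 * a + b ≠ 0) : Odd (collatzStep a b) := by
  rw [collatzStep, ← Nat.factorization_def _ Nat.prime_two, Nat.odd_iff]
  exact Nat.two_dvd_ne_zero.mp (Nat.not_dvd_ordCompl Nat.prime_two h)

theorem two_mul_collatzStep {a b : ℕ} (h : (3 * a + b) % 4 = 2) :
    2 * collatzStep a b = 3 * a + b := by
  obtain ⟨c, hc⟩ : ∃ c, 3 * a + b = 2 * (2 * c + 1) := ⟨(3 * a + b) / 4, by omega⟩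
  have : Fact (Nat.Prime 2) := ⟨Nat.prime_two⟩
  rw [collatzStep, hc, padicValNat.mul two_ne_zero (by omega), padicValNat.self one_lt_two,
    padicValNat.eq_zero_of_not_dvd (by omega)]
  omega

section CollatzSequence

variable {a b : ℕ → ℕ}

theorem odd_of_collatzStep (ha : ∀ n, a (n + 1) = collatzStep (a n) (b (n + 1)))
    (h0 : Odd (a 0)) (n : ℕ) : Odd (a n) := by
  induction n with
  | zero => exact h0
  | succ n ih => rw [ha]; exact odd_collatzStep (by have := ih.pos; omega)

theorem three_halves_pow_mul_le_of_collatzStep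
    (ha : ∀ n, a (n + 1) = collatzStep (a n) (b (n + 1))) {n c : ℕ}
    (hgood : ∀ t < c, (3 * a (n + t) + b (n + t + 1)) % 4 = 2) :
    (3 / 2 : ℝ) ^ c * a n ≤ a (n + c) := by
  induction c with
  | zero => simp
  | succ c ih =>
    have hstep : 3 * a (n + c) ≤ 2 * a (n + c + 1) := by
      rw [ha, two_mul_collatzStep (hgood c c.lt_succ_self)]; omega
    have hstep' : (3 : ℝ) * a (n + c) ≤ 2 * a (n + (c + 1)) := by exact_mod_cast hstep
    calc (3 / 2 : ℝ) ^ (c + 1) * a n = 3 / 2 * ((3 / 2) ^ c * a n) := by ring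
      _ ≤ 3 / 2 * a (n + c) := by
          gcongr; exact ih fun t ht => hgood t (ht.trans c.lt_succ_self)
      _ ≤ a (n + (c + 1)) := by linarith

end CollatzSequence

theorem ENat.natCast_lt_iInf_iff {P : ℕ → Prop} {n : ℕ} :
    (n : ℕ∞) < ⨅ (j : ℕ) (_ : P j), (j : ℕ∞) ↔ ∀ j ≤ n, ¬ P j := by
  simp only [← ENat.natCast_add_one_le_iff, le_iInf_iff]
  refine ⟨fun h j hj hPj => ?_, fun h j hPj => ?_⟩
  · have := h j hPj
    norm_cast at this
    omega
  · have : n < j := by by_contra! hjn; exact h j hjn hPj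
    exact_mod_cast this

section Probability

variable {Ω : Type*} {mΩ : MeasurableSpace Ω} {μ : Measure Ω}

theorem measurableSet_natCast_lt_iInf {P : ℕ → Ω → Prop} (hP : ∀ j, MeasurableSet {ω | P j ω})
    (n : ℕ) : MeasurableSet {ω | (n : ℕ∞) < ⨅ (j : ℕ) (_ : P j ω), (j : ℕ∞)} := by
  simp only [ENat.natCast_lt_iInf_iff, Set.ofPred_forall]
  exact .iInter fun j => .iInter fun _ => (hP j).compl

/-- Mathlib's `iIndepFun.indep_comap_natural_of_lt` asks for a normed codomain. -/
theorem ProbabilityTheory.iIndepFun.indep_comap_natural_of_lt' {ι β : Type*} [LinearOrder ι]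
    [TopologicalSpace β] [TopologicalSpace.MetrizableSpace β] [mβ : MeasurableSpace β]
    [BorelSpace β] {f : ι → Ω → β} (hf : ∀ i, StronglyMeasurable (f i)) (hfi : iIndepFun f μ)
    {i j : ι} (hij : i < j) :
    Indep (MeasurableSpace.comap (f j) mβ) (Filtration.natural f hf i) μ := by
  have := indep_iSup_of_disjoint (fun k => (hf k).measurable.comap_le) hfi
    (S := {j}) (T := Set.Iic i) (by simpa using hij)
  rwa [iSup_singleton] at this

theorem measure_inter_setOf_mem_eq_mul {m : MeasurableSpace Ω} (hm : m ≤ mΩ)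
    {β γ : Type*} [MeasurableSpace β] [MeasurableSingletonClass β] [Countable β]
    [mγ : MeasurableSpace γ] {Y : Ω → β} {Z : Ω → γ} (hY : Measurable[m] Y)
    (hZ : Measurable[mΩ] Z) (hind : Indep (MeasurableSpace.comap Z mγ) m μ) {S : β → Set γ}
    (hS : ∀ b, MeasurableSet (S b)) {p : ℝ≥0∞} (hp : ∀ ω, μ (Z ⁻¹' S (Y ω)) = p)
    {E : Set Ω} (hE : MeasurableSet[m] E) :
    μ (E ∩ {ω | Z ω ∈ S (Y ω)}) = μ E * p := by
  have hfib (b : β) : MeasurableSet[m] (E ∩ Y ⁻¹' {b}) :=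
    hE.inter (hY (measurableSet_singleton b))
  have hdisj : Pairwise (Function.onFun Disjoint fun b => E ∩ Y ⁻¹' {b}) := fun b b' hbb' =>
    ((Set.pairwiseDisjoint_fiber Y Set.univ) trivial trivial hbb').mono Set.inter_subset_right
      Set.inter_subset_right
  -- on the fibre `Y = b` the event is `Z ∈ S b`, independent of the fibre
  have hterm (b : β) : μ (E ∩ Y ⁻¹' {b} ∩ Z ⁻¹' S b) = μ (E ∩ Y ⁻¹' {b}) * p := by
    rw [(Indep_iff _ _ μ).mp hind.symm _ _ (hfib b) ⟨S b, hS b, rfl⟩]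
    rcases (E ∩ Y ⁻¹' {b}).eq_empty_or_nonempty with h | ⟨ω, -, hω⟩
    · simp [h]
    · rw [← hω, hp]
  calc μ (E ∩ {ω | Z ω ∈ S (Y ω)}) = μ (⋃ b, E ∩ Y ⁻¹' {b} ∩ Z ⁻¹' S b) := by
        congr 1; ext ω; simp
    _ = ∑' b, μ (E ∩ Y ⁻¹' {b}) * p := by
        rw [measure_iUnion (fun b b' h => (hdisj h).mono Set.inter_subset_left
          Set.inter_subset_left) fun b => (hm _ (hfib b)).inter (hZ (hS b))]
        exact tsum_congr hterm
    _ = μ E * p := by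
        rw [ENNReal.tsum_mul_right, ← measure_iUnion hdisj fun b => hm _ (hfib b),
          ← Set.inter_iUnion]
        congr
        ext ω
        simp

section Runs

variable {𝓕 : Filtration ℕ mΩ} {G : ℕ → Set Ω} {p : ℝ≥0∞}

def runFrom (G : ℕ → Set Ω) (n s : ℕ) : Set Ω := ⋂ t < s, G (n + t)

def noRunBefore (G : ℕ → Set Ω) (k m : ℕ) : Set Ω := ⋂ j < m, (runFrom G (j * k) k)ᶜ

theorem measurableSet_runFrom (hG : ∀ n, MeasurableSet[𝓕 (n + 1)] (G n)) (n s : ℕ) :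
    MeasurableSet[𝓕 (n + s)] (runFrom G n s) :=
  .iInter fun t => .iInter fun ht => 𝓕.mono (by omega) _ (hG (n + t))

theorem measurableSet_noRunBefore (hG : ∀ n, MeasurableSet[𝓕 (n + 1)] (G n)) (k m : ℕ) :
    MeasurableSet[𝓕 (m * k)] (noRunBefore G k m) :=
  .iInter fun j => .iInter fun hj => .compl <|
    𝓕.mono (by nlinarith) _ (measurableSet_runFrom hG (j * k) k)

theorem measure_inter_runFrom (hG : ∀ n, MeasurableSet[𝓕 (n + 1)] (G n))
    (hGp : ∀ n F, MeasurableSet[𝓕 n] F → μ (F ∩ G n) = μ F * p)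
    {n : ℕ} {F : Set Ω} (hF : MeasurableSet[𝓕 n] F) (s : ℕ) :
    μ (F ∩ runFrom G n s) = μ F * p ^ s := by
  induction s with
  | zero => simp [runFrom]
  | succ s ih =>
    have hFs : MeasurableSet[𝓕 (n + s)] (F ∩ runFrom G n s) :=
      (𝓕.mono (by omega) _ hF).inter (measurableSet_runFrom hG n s)
    rw [runFrom, Set.biInter_lt_succ, ← Set.inter_assoc, ← runFrom, hGp _ _ hFs, ih, pow_succ,
      mul_assoc]

theorem measure_noRunBefore [IsProbabilityMeasure μ]
    (hG : ∀ n, MeasurableSet[𝓕 (n + 1)] (G n))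
    (hGp : ∀ n F, MeasurableSet[𝓕 n] F → μ (F ∩ G n) = μ F * p) (k m : ℕ) :
    μ (noRunBefore G k m) = (1 - p ^ k) ^ m := by
  induction m with
  | zero => simp [noRunBefore]
  | succ m ih =>
    have hrun := measure_inter_runFrom hG hGp (measurableSet_noRunBefore hG k m) k
    have hsplit := measure_inter_add_sdiff (μ := μ) (noRunBefore G k m)
      (𝓕.le _ _ (measurableSet_runFrom hG (m * k) k))
    rw [noRunBefore, Set.biInter_lt_succ, ← noRunBefore, ← Set.sdiff_eq, pow_succ, ← ih,
      ENNReal.mul_sub fun _ _ => measure_ne_top μ _, mul_one, ← hrun, ← hsplit,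
      ENNReal.add_sub_cancel_left (measure_ne_top μ _)]

theorem setOf_lt_iInf_subset_noRunBefore {k : ℕ} {P : ℕ → Ω → Prop}
    (hrun : ∀ n ω, ω ∈ runFrom G n k → P (n + k) ω) (m : ℕ) :
    {ω | ((m * k : ℕ) : ℕ∞) < ⨅ (j : ℕ) (_ : P j ω), (j : ℕ∞)} ⊆ noRunBefore G k m := by
  intro ω hω
  rw [Set.mem_ofPred_eq, ENat.natCast_lt_iInf_iff] at hω
  simp only [noRunBefore, Set.mem_iInter, Set.mem_compl_iff]
  exact fun j hj hjrun => hω (j * k + k) (by nlinarith) (hrun _ _ hjrun)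

end Runs

section GeometricTail

variable {N : Ω → ℕ∞} {k : ℕ} {q : ℝ≥0∞} {α : ℝ}

theorem ofReal_exp_mul_toNat_le_tsum (hk : 0 < k) (hα : 0 ≤ α) (ω : Ω) :
    ENNReal.ofReal (exp (α * (N ω).toNat)) ≤ ENNReal.ofReal (exp (α * k)) +
      ∑' m : ℕ, {ω | ((m * k : ℕ) : ℕ∞) < N ω}.indicator
        (fun _ => ENNReal.ofReal (exp (α * k)) ^ (m + 2)) ω := by
  set t := (N ω).toNat
  have hpow (m : ℕ) :
      ENNReal.ofReal (exp (α * k)) ^ m = ENNReal.ofReal (exp (α * (m * k))) := by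
    rw [← ENNReal.ofReal_pow (exp_nonneg _), ← exp_nat_mul, mul_left_comm]
  rcases lt_or_ge t k with htk | hkt
  · refine le_add_right (ENNReal.ofReal_le_ofReal (exp_le_exp.mpr ?_))
    exact mul_le_mul_of_nonneg_left (by exact_mod_cast htk.le) hα
  · -- `t` lies in the block `[(m + 1) k, (m + 2) k)`
    obtain ⟨m, hm⟩ : ∃ m, t / k = m + 1 :=
      ⟨t / k - 1, by have := (Nat.one_le_div_iff hk).mpr hkt; omega⟩
    have hlo : (m + 1) * k ≤ t := hm ▸ Nat.div_mul_le_self t k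
    have hhi : t < (m + 2) * k := by
      have := Nat.lt_div_mul_add (a := t) hk; rw [hm] at this; linarith
    have hNt : N ω = t := (ENat.natCast_toNat (by intro h; simp [t, h] at hlo; omega)).symm
    have hmem : ω ∈ {ω | ((m * k : ℕ) : ℕ∞) < N ω} := by
      rw [Set.mem_ofPred_eq, hNt, Nat.cast_lt]; nlinarith
    refine le_add_left (le_trans ?_ (ENNReal.le_tsum m))
    rw [Set.indicator_of_mem hmem, hpow]
    refine ENNReal.ofReal_le_ofReal (exp_le_exp.mpr (mul_le_mul_of_nonneg_left ?_ hα))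
    exact_mod_cast hhi.le

theorem lintegral_exp_mul_toNat_lt_top [IsFiniteMeasure μ] (hk : 0 < k)
    (hmeas : ∀ n : ℕ, MeasurableSet {ω | (n : ℕ∞) < N ω})
    (htail : ∀ m : ℕ, μ {ω | ((m * k : ℕ) : ℕ∞) < N ω} ≤ q ^ m)
    (hα : 0 ≤ α) (hαq : ENNReal.ofReal (exp (α * k)) * q < 1) :
    ∫⁻ ω, ENNReal.ofReal (exp (α * (N ω).toNat)) ∂μ < ⊤ := by
  set c := ENNReal.ofReal (exp (α * k))
  calc ∫⁻ ω, ENNReal.ofReal (exp (α * (N ω).toNat)) ∂μ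
      ≤ ∫⁻ ω, (c + ∑' m : ℕ,
          {ω | ((m * k : ℕ) : ℕ∞) < N ω}.indicator (fun _ => c ^ (m + 2)) ω) ∂μ :=
        lintegral_mono (ofReal_exp_mul_toNat_le_tsum hk hα)
    _ = c * μ Set.univ + ∑' m : ℕ, c ^ (m + 2) * μ {ω | ((m * k : ℕ) : ℕ∞) < N ω} := by
        rw [lintegral_add_left measurable_const, lintegral_const,
          lintegral_tsum fun m => (measurable_const.indicator (hmeas _)).aemeasurable]
        simp only [lintegral_indicator_const (hmeas _)]
    _ ≤ c * μ Set.univ + ∑' m : ℕ, c ^ 2 * (c * q) ^ m := by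
        refine add_le_add_right (ENNReal.tsum_le_tsum fun m => ?_) _
        rw [pow_add, mul_comm (c ^ m), mul_pow, mul_assoc]
        gcongr
        exact htail m
    _ < ⊤ := by
        rw [ENNReal.tsum_mul_left, ENNReal.tsum_geometric]
        exact ENNReal.add_lt_top.mpr
          ⟨ENNReal.mul_lt_top ENNReal.ofReal_lt_top (measure_lt_top μ _),
            ENNReal.mul_lt_top (ENNReal.pow_lt_top ENNReal.ofReal_lt_top)
              (ENNReal.inv_lt_top.mpr (tsub_pos_iff_lt.mpr hαq))⟩

theorem exists_pos_forall_lintegral_exp_mul_toNat_lt_top [IsFiniteMeasure μ] (hk : 0 < k)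
    (hmeas : ∀ n : ℕ, MeasurableSet {ω | (n : ℕ∞) < N ω})
    (htail : ∀ m : ℕ, μ {ω | ((m * k : ℕ) : ℕ∞) < N ω} ≤ q ^ m) (hq : q < 1) :
    ∃ α₀ > (0 : ℝ), ∀ α < α₀, ∫⁻ ω, ENNReal.ofReal (exp (α * (N ω).toNat)) ∂μ < ⊤ := by
  -- replacing `q` by `r ≥ 1/2` keeps the tail bound and makes `log r` finite
  set r := max q.toReal (1 / 2)
  have hr0 : 0 < r := lt_max_of_lt_right one_half_pos
  have hr1 : r < 1 := max_lt ((ENNReal.toReal_lt_toReal hq.ne_top ENNReal.one_ne_top).mpr hq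
    |>.trans_eq ENNReal.toReal_one) (by norm_num)
  have hqr : q ≤ ENNReal.ofReal r :=
    (ENNReal.le_ofReal_iff_toReal_le hq.ne_top hr0.le).mpr (le_max_left _ _)
  have hα₀ : 0 < -log r / k := div_pos (neg_pos.mpr (log_neg hr0 hr1)) (by exact_mod_cast hk)
  refine ⟨-log r / k, hα₀, fun α hα => ?_⟩
  have hα' : max α 0 * k < -log r := by
    rw [← lt_div_iff₀ (by exact_mod_cast hk)]
    exact max_lt hα hα₀
  refine lt_of_le_of_lt (lintegral_mono fun ω => ?_) (lintegral_exp_mul_toNat_lt_top hk hmeas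
    (fun m => (htail m).trans (pow_le_pow_left' hqr m)) (le_max_right α 0) ?_)
  · exact ENNReal.ofReal_le_ofReal (exp_le_exp.mpr
      (mul_le_mul_of_nonneg_right (le_max_left α 0) (Nat.cast_nonneg _)))
  · rw [← ENNReal.ofReal_mul (exp_nonneg _), ← ENNReal.ofReal_one,
      ENNReal.ofReal_lt_ofReal_iff one_pos]
    calc exp (max α 0 * k) * r < exp (-log r) * r := by gcongr
      _ = 1 := by rw [exp_neg, exp_log hr0, inv_mul_cancel₀ hr0.ne']

theorem ae_lt_top_of_measure_lt_le_pow (hq : q < 1)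
    (htail : ∀ m : ℕ, μ {ω | ((m * k : ℕ) : ℕ∞) < N ω} ≤ q ^ m) : ∀ᵐ ω ∂μ, N ω < ⊤ := by
  refine ae_iff.mpr (le_antisymm (ge_of_tendsto'
    (ENNReal.tendsto_pow_atTop_nhds_zero_of_lt_one hq)
    fun m => le_trans (measure_mono fun ω hω => ?_) (htail m)) zero_le)
  simp only [Set.mem_ofPred_eq, not_lt, top_le_iff] at hω ⊢
  rw [hω]
  exact ENat.natCast_lt_top _

theorem lintegral_lt_top_of_lintegral_exp_mul_toNat_lt_top (hα : 0 < α)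
    (hfin : ∀ᵐ ω ∂μ, N ω < ⊤) (hexp : ∫⁻ ω, ENNReal.ofReal (exp (α * (N ω).toNat)) ∂μ < ⊤) :
    ∫⁻ ω, (N ω : ℝ≥0∞) ∂μ < ⊤ := by
  have hle : ∀ᵐ ω ∂μ, (N ω : ℝ≥0∞) ≤
      ENNReal.ofReal α⁻¹ * ENNReal.ofReal (exp (α * (N ω).toNat)) := by
    filter_upwards [hfin] with ω hω
    have hNω : (N ω : ℝ≥0∞) = ENNReal.ofReal (N ω).toNat := by
      conv_lhs => rw [← ENat.natCast_toNat hω.ne]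
      simp
    rw [hNω, ← ENNReal.ofReal_mul (inv_nonneg.mpr hα.le)]
    refine ENNReal.ofReal_le_ofReal ?_
    rw [le_inv_mul_iff₀ hα]
    linarith [add_one_le_exp (α * (N ω).toNat)]
  calc ∫⁻ ω, (N ω : ℝ≥0∞) ∂μ
      ≤ ∫⁻ ω, ENNReal.ofReal α⁻¹ * ENNReal.ofReal (exp (α * (N ω).toNat)) ∂μ :=
        lintegral_mono_ae hle
    _ < ⊤ := by
        rw [lintegral_const_mul' _ _ ENNReal.ofReal_ne_top]
        exact ENNReal.mul_lt_top ENNReal.ofReal_lt_top hexp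

end GeometricTail

section RandomCollatz

variable {ξ X : ℕ → Ω → ℕ}

theorem measure_preimage_mod_four_eq_half {ζ : Ω → ℕ} (hmeas : Measurable ζ)
    (hval : ∀ ω, ζ ω = 1 ∨ ζ ω = 3 ∨ ζ ω = 5 ∨ ζ ω = 7)
    (hdist : μ {ω | ζ ω = 1} = 1/4 ∧ μ {ω | ζ ω = 3} = 1/4 ∧
      μ {ω | ζ ω = 5} = 1/4 ∧ μ {ω | ζ ω = 7} = 1/4)
    {r : ℕ} (hr : Odd r) : μ (ζ ⁻¹' {z | z % 4 = r % 4}) = 1 / 2 := by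
  have hpair (c : ℕ) (hc : c < 4) :
      ζ ⁻¹' {z | z % 4 = c} = {ω | ζ ω = c} ∪ {ω | ζ ω = c + 4} := by
    ext ω; rcases hval ω with h | h | h | h <;> simp [h] <;> omega
  have hdisj (c : ℕ) : Disjoint {ω | ζ ω = c} {ω | ζ ω = c + 4} :=
    Set.disjoint_left.mpr fun ω h h' => by simp_all
  have hquarters : (1 / 4 : ℝ≥0∞) + 1 / 4 = 1 / 2 := by
    rw [ENNReal.div_add_div_same, ENNReal.div_eq_div_iff] <;> norm_num
  obtain ⟨h1, h3, h5, h7⟩ := hdist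
  rcases Nat.odd_mod_four_iff.mp (Nat.odd_iff.mp hr) with h | h <;>
    rw [h, hpair _ (by norm_num), measure_union (hdisj _) (hmeas (measurableSet_singleton _))]
  · rw [h1, h5, hquarters]
  · rw [h3, h7, hquarters]

theorem measurable_natural_of_forall_succ_eq (hξ : ∀ n, Measurable (ξ n)) {x : ℕ}
    (hX0 : ∀ ω, X 0 ω = x) (f : ℕ → ℕ → ℕ)
    (hX : ∀ n ω, X (n + 1) ω = f (X n ω) (ξ (n + 1) ω)) (n : ℕ) :
    Measurable[Filtration.natural ξ (fun n => (hξ n).stronglyMeasurable) n] (X n) := by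
  induction n with
  | zero => rw [show X 0 = fun _ => x from funext hX0]; exact measurable_const
  | succ n ih =>
    rw [show X (n + 1) = fun ω => f (X n ω) (ξ (n + 1) ω) from funext (hX n)]
    exact (measurable_of_countable (Function.uncurry f)).comp
      ((ih.mono (Filtration.mono _ n.le_succ) le_rfl).prodMk
        (Filtration.stronglyAdapted_natural (fun n => (hξ n).stronglyMeasurable)
          (n + 1)).measurable)

def goodStep (ξ X : ℕ → Ω → ℕ) (n : ℕ) : Set Ω := {ω | (3 * X n ω + ξ (n + 1) ω) % 4 = 2}

theorem measurableSet_goodStep {𝓕 : Filtration ℕ mΩ} (hX : ∀ n, Measurable[𝓕 n] (X n))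
    (hξ : ∀ n, Measurable[𝓕 n] (ξ n)) (n : ℕ) : MeasurableSet[𝓕 (n + 1)] (goodStep ξ X n) :=
  ((hX n).mono (𝓕.mono n.le_succ) le_rfl).prodMk (hξ (n + 1))
    (MeasurableSet.of_discrete (s := {p : ℕ × ℕ | (3 * p.1 + p.2) % 4 = 2}))

theorem measure_inter_goodStep (hξmeas : ∀ n, Measurable (ξ n))
    (hξval : ∀ n ω, ξ n ω = 1 ∨ ξ n ω = 3 ∨ ξ n ω = 5 ∨ ξ n ω = 7)
    (hξindep : iIndepFun ξ μ)
    (hξdist : ∀ n, μ {ω | ξ n ω = 1} = 1/4 ∧ μ {ω | ξ n ω = 3} = 1/4 ∧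
      μ {ω | ξ n ω = 5} = 1/4 ∧ μ {ω | ξ n ω = 7} = 1/4)
    (hXmeas : ∀ n,
      Measurable[Filtration.natural ξ (fun n => (hξmeas n).stronglyMeasurable) n] (X n))
    (hodd : ∀ n ω, Odd (X n ω)) {n : ℕ} {F : Set Ω}
    (hF : MeasurableSet[Filtration.natural ξ (fun n => (hξmeas n).stronglyMeasurable) n] F) :
    μ (F ∩ goodStep ξ X n) = μ F * (1 / 2) := by
  -- `3 a + z ≡ 2 [MOD 4]` iff `z ≡ a + 2 [MOD 4]`, and `a + 2` is odd when `a` is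
  have hgood : goodStep ξ X n = {ω | ξ (n + 1) ω ∈ {z | z % 4 = (X n ω + 2) % 4}} := by
    ext ω; simp only [goodStep, Set.mem_ofPred_eq]; omega
  rw [hgood]
  exact measure_inter_setOf_mem_eq_mul (Filtration.le _ n) (hXmeas n) (hξmeas (n + 1))
    (hξindep.indep_comap_natural_of_lt' _ n.lt_succ_self)
    (S := fun a => {z | z % 4 = (a + 2) % 4}) (fun _ => .of_discrete)
    (fun ω => measure_preimage_mod_four_eq_half (hξmeas _) (hξval _) (hξdist _)
      ((hodd n ω).add_even even_two)) hF

theorem le_log_of_mem_runFrom_goodStep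
    (hX : ∀ n ω, X (n + 1) ω = collatzStep (X n ω) (ξ (n + 1) ω))
    (hodd : ∀ n ω, Odd (X n ω)) {M : ℝ} {k : ℕ} (hkM : M ≤ k * log (3 / 2)) {n : ℕ} {ω : Ω}
    (h : ω ∈ runFrom (goodStep ξ X) n k) : M ≤ log (X (n + k) ω) := by
  -- a run of `k` good steps multiplies `X ≥ 1` by at least `(3/2)^k ≥ e^M`
  have hgrowth := three_halves_pow_mul_le_of_collatzStep (a := (X · ω)) (b := (ξ · ω))
    (fun n => hX n ω) (n := n) (c := k) (by simpa [runFrom, goodStep, add_assoc] using h)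
  have hX1 : (1 : ℝ) ≤ X n ω := by exact_mod_cast (hodd n ω).pos
  calc M ≤ log ((3 / 2) ^ k) := by rwa [log_pow]
    _ ≤ log (X (n + k) ω) :=
        log_le_log (by positivity) (by nlinarith [pow_pos (by norm_num : (0 : ℝ) < 3 / 2) k])

theorem measure_natCast_mul_lt_iInf_le_pow [IsProbabilityMeasure μ]
    (hξmeas : ∀ n, Measurable (ξ n))
    (hξval : ∀ n ω, ξ n ω = 1 ∨ ξ n ω = 3 ∨ ξ n ω = 5 ∨ ξ n ω = 7)
    (hξindep : iIndepFun ξ μ)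
    (hξdist : ∀ n, μ {ω | ξ n ω = 1} = 1/4 ∧ μ {ω | ξ n ω = 3} = 1/4 ∧
      μ {ω | ξ n ω = 5} = 1/4 ∧ μ {ω | ξ n ω = 7} = 1/4)
    {x : ℕ} (hx : Odd x) (hX0 : ∀ ω, X 0 ω = x)
    (hX : ∀ n ω, X (n + 1) ω = collatzStep (X n ω) (ξ (n + 1) ω))
    {M : ℝ} {k : ℕ} (hkM : M ≤ k * log (3 / 2)) (m : ℕ) :
    μ {ω | ((m * k : ℕ) : ℕ∞) < ⨅ (j : ℕ) (_ : M ≤ log (X j ω)), (j : ℕ∞)} ≤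
      (1 - (1 / 2) ^ k) ^ m := by
  have hodd (n : ℕ) (ω : Ω) : Odd (X n ω) :=
    odd_of_collatzStep (a := (X · ω)) (b := (ξ · ω)) (fun n => hX n ω) (hX0 ω ▸ hx) n
  have hXmeas := measurable_natural_of_forall_succ_eq hξmeas hX0 collatzStep hX
  have hG := measurableSet_goodStep hXmeas fun n =>
    (Filtration.stronglyAdapted_natural (fun n => (hξmeas n).stronglyMeasurable) n).measurable
  have hGp (n : ℕ) (F : Set Ω) := measure_inter_goodStep (n := n) (F := F)
    hξmeas hξval hξindep hξdist hXmeas hodd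
  exact (measure_mono (setOf_lt_iInf_subset_noRunBefore
    (fun _ _ => le_log_of_mem_runFrom_goodStep hX hodd hkM) m)).trans
      (measure_noRunBefore hG hGp k m).le

end RandomCollatz

end Probability

theorem stmt_10_general
    {Ω : Type*} [MeasurableSpace Ω] (μ : MeasureTheory.Measure Ω)
    [MeasureTheory.IsProbabilityMeasure μ]
    (ξ : ℕ → Ω → ℕ)
    (hξval : ∀ n ω, ξ n ω = 1 ∨ ξ n ω = 3 ∨ ξ n ω = 5 ∨ ξ n ω = 7)
    (hξmeas : ∀ n, Measurable (ξ n))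
    (hξindep : ProbabilityTheory.iIndepFun ξ μ)
    (hξdist : ∀ n, μ {ω | ξ n ω = 1} = 1/4 ∧ μ {ω | ξ n ω = 3} = 1/4 ∧
      μ {ω | ξ n ω = 5} = 1/4 ∧ μ {ω | ξ n ω = 7} = 1/4)
    (x : ℕ) (hx : Odd x)
    (X : ℕ → Ω → ℕ)
    (hX0 : ∀ ω, X 0 ω = x)
    (hXrec : ∀ n ω, X (n + 1) ω =
      (3 * X n ω + ξ (n + 1) ω) / 2 ^ padicValNat 2 (3 * X n ω + ξ (n + 1) ω))
    (M : ℝ)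
    (N₁ : Ω → ℕ∞)
    (hN₁ : ∀ ω, N₁ ω = ⨅ (n : ℕ) (_ : M ≤ Real.log (X n ω)), (n : ℕ∞)) :
    (∃ α₀ > (0 : ℝ), ∀ α : ℝ, α < α₀ →
      ∫⁻ ω, ENNReal.ofReal (Real.exp (α * (N₁ ω).toNat)) ∂μ < ⊤) ∧
    (∀ᵐ ω ∂μ, N₁ ω < ⊤) ∧
    ∫⁻ ω, (N₁ ω : ENNReal) ∂μ < ⊤ := by
  have hX (n : ℕ) (ω : Ω) : X (n + 1) ω = collatzStep (X n ω) (ξ (n + 1) ω) := hXrec n ω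
  obtain ⟨k, hk, hkM⟩ : ∃ k : ℕ, 0 < k ∧ M ≤ k * log (3 / 2) :=
    ⟨max 1 ⌈M / log (3 / 2)⌉₊, by positivity, (div_le_iff₀ (log_pos (by norm_num))).mp
      ((Nat.le_ceil _).trans (by exact_mod_cast le_max_right _ _))⟩
  have htail (m : ℕ) : μ {ω | ((m * k : ℕ) : ℕ∞) < N₁ ω} ≤ (1 - (1 / 2) ^ k) ^ m := by
    simpa only [hN₁] using
      measure_natCast_mul_lt_iInf_le_pow hξmeas hξval hξindep hξdist hx hX0 hX hkM m
  have hmeas (n : ℕ) : MeasurableSet {ω | (n : ℕ∞) < N₁ ω} := by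
    simp only [hN₁]
    refine measurableSet_natCast_lt_iInf (fun j => ?_) n
    exact (measurable_natural_of_forall_succ_eq hξmeas hX0 collatzStep hX j).mono
      (Filtration.le _ j) le_rfl (MeasurableSet.of_discrete (s := {a : ℕ | M ≤ log a}))
  have hq : 1 - (1 / 2 : ℝ≥0∞) ^ k < 1 :=
    ENNReal.sub_lt_self ENNReal.one_ne_top one_ne_zero (pow_ne_zero _ (by norm_num))
  obtain ⟨α₀, hα₀, hexp⟩ := exists_pos_forall_lintegral_exp_mul_toNat_lt_top hk hmeas htail hq
  have hfin := ae_lt_top_of_measure_lt_le_pow hq htail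
  exact ⟨⟨α₀, hα₀, hexp⟩, hfin, lintegral_lt_top_of_lintegral_exp_mul_toNat_lt_top
    (half_pos hα₀) hfin (hexp _ (half_lt_self hα₀))⟩

/-- For the randomized Collatz chain started at a positive odd integer `x`, with `M > 1`
and `N₁ := inf {n ≥ 0 : ln Xₙ ≥ M}`, there exists `α₀ > 0` with `E[exp (α N₁)] < ∞` for
all `α < α₀`; in particular `N₁ < ∞` a.s. and `E[N₁] < ∞`. -/
theorem stmt_10
    {Ω : Type*} [MeasurableSpace Ω] (μ : MeasureTheory.Measure Ω)
    [MeasureTheory.IsProbabilityMeasure μ]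
    (ξ : ℕ → Ω → ℕ)
    (hξval : ∀ n ω, ξ n ω = 1 ∨ ξ n ω = 3 ∨ ξ n ω = 5 ∨ ξ n ω = 7)
    (hξmeas : ∀ n, Measurable (ξ n))
    (hξindep : ProbabilityTheory.iIndepFun ξ μ)
    (hξdist : ∀ n, μ {ω | ξ n ω = 1} = 1/4 ∧ μ {ω | ξ n ω = 3} = 1/4 ∧
      μ {ω | ξ n ω = 5} = 1/4 ∧ μ {ω | ξ n ω = 7} = 1/4)
    (x : ℕ) (hx : Odd x) (hxpos : 0 < x)
    (X : ℕ → Ω → ℕ)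
    (hX0 : ∀ ω, X 0 ω = x)
    (hXrec : ∀ n ω, X (n + 1) ω =
      (3 * X n ω + ξ (n + 1) ω) / 2 ^ padicValNat 2 (3 * X n ω + ξ (n + 1) ω))
    (d : ℕ → Ω → ℕ)
    (hd : ∀ n ω, d (n + 1) ω = padicValNat 2 (3 * X n ω + ξ (n + 1) ω))
    (M : ℝ) (hM : 1 < M)
    (N₁ : Ω → ℕ∞)
    (hN₁ : ∀ ω, N₁ ω = ⨅ (n : ℕ) (_ : M ≤ Real.log (X n ω)), (n : ℕ∞)) :
    (∃ α₀ > (0 : ℝ), ∀ α : ℝ, α < α₀ →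
      ∫⁻ ω, ENNReal.ofReal (Real.exp (α * (N₁ ω).toNat)) ∂μ < ⊤) ∧
    (∀ᵐ ω ∂μ, N₁ ω < ⊤) ∧
    ∫⁻ ω, (N₁ ω : ENNReal) ∂μ < ⊤ :=
  stmt_10_general μ ξ hξval hξmeas hξindep hξdist x hx X hX0 hXrec M N₁ hN₁
end

section
/- (Proposition 2, recurrence part) For the randomized Collatz chain started at any positive odd integer x, almost surely X_n = 1 for infinitely many n; that is, P( X_n = 1 infinitely often ) = 1. -/
/-!
`√y` is a Lyapunov function for the chain: averaging over the four digits,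
`E √X (n + 1) ≤ 0.99 E √X n + 2`, so `E √X n ≤ √x + 200` for all `n` and, by Markov's inequality,
`P (X n > M) ≤ (√x + 200) / √M` uniformly in `n`.

On the other hand, for odd `y` the digit `5 y mod 8` makes `3 y + ξ` divisible by `8`; following
these digits, an odd `y ≤ M` decreases to `1` within `M` steps. As the next digit is uniform and
independent of the past, this happens with probability `4⁻ᴹ` given any past event. Cutting time
into blocks of length `M`, the chain misses `1` at the ends of `k` consecutive blocks with
probability at most `(1 - 4⁻ᴹ) ^ k + (√x + 200) / √M`; letting `k → ∞` and then `M → ∞`,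
it almost surely visits `1` after any given time.
-/

namespace RandomCollatz

open MeasureTheory ProbabilityTheory Filter Topology
open scoped ENNReal

def digits : Finset ℕ := {1, 3, 5, 7}

lemma mem_digits {c : ℕ} : c ∈ digits ↔ c = 1 ∨ c = 3 ∨ c = 5 ∨ c = 7 := by
  simp [digits]

lemma sum_digits {M : Type*} [AddCommMonoid M] (f : ℕ → M) :
    ∑ c ∈ digits, f c = f 1 + f 3 + f 5 + f 7 := by
  norm_num [digits, add_assoc]

def collatzStep (y c : ℕ) : ℕ := ordCompl[2] (3 * y + c)

/-- Since `3 * 5 ≡ -1 [MOD 8]`, `3 y + descentDigit y ≡ 8 y ≡ 0 [MOD 8]`. -/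
def descentDigit (y : ℕ) : ℕ := 5 * y % 8

def descentStep (y : ℕ) : ℕ := collatzStep y (descentDigit y)

lemma collatzStep_eq_div_padicValNat (y c : ℕ) :
    collatzStep y c = (3 * y + c) / 2 ^ padicValNat 2 (3 * y + c) := by
  rw [collatzStep, Nat.factorization_def _ Nat.prime_two]

lemma collatzStep_odd {y c : ℕ} (hc : c ≠ 0) : Odd (collatzStep y c) :=
  Nat.odd_iff.mpr (Nat.two_dvd_ne_zero.mp (Nat.not_dvd_ordCompl Nat.prime_two (by omega)))

lemma collatzStep_le_div {y c k : ℕ} (hc : c ≠ 0) (hk : 2 ^ k ∣ 3 * y + c) :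
    collatzStep y c ≤ (3 * y + c) / 2 ^ k :=
  Nat.div_le_div_left (Nat.pow_le_pow_right two_pos
    ((Nat.prime_two.pow_dvd_iff_le_factorization (by omega)).mp hk)) (by positivity)

lemma descentDigit_mem_digits {y : ℕ} (hy : Odd y) : descentDigit y ∈ digits := by
  obtain ⟨k, rfl⟩ := hy
  rw [mem_digits, descentDigit]
  omega

lemma descentStep_le {y : ℕ} (hy : Odd y) : descentStep y ≤ (3 * y + 7) / 8 := by
  have hd := mem_digits.mp (descentDigit_mem_digits hy)
  have h8 : 2 ^ 3 ∣ 3 * y + descentDigit y := by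
    obtain ⟨k, rfl⟩ := hy
    rw [descentDigit]
    omega
  calc descentStep y ≤ (3 * y + descentDigit y) / 2 ^ 3 := collatzStep_le_div (by omega) h8
    _ ≤ (3 * y + 7) / 8 := Nat.div_le_div_right (by omega)

lemma descentStep_odd {y : ℕ} (hy : Odd y) : Odd (descentStep y) :=
  collatzStep_odd (by have := mem_digits.mp (descentDigit_mem_digits hy); omega)

lemma descentStep_iterate_eq_one {y m : ℕ} (hy : Odd y) (hm : y ≤ m + 1) :
    descentStep^[m] y = 1 := by
  induction m generalizing y with
  | zero => obtain ⟨k, rfl⟩ := hy; simp; omega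
  | succ m ih =>
    rw [Function.iterate_succ_apply]
    refine ih (descentStep_odd hy) ?_
    have hle := descentStep_le hy
    obtain ⟨a, ha⟩ := descentStep_odd hy
    obtain ⟨k, rfl⟩ := hy
    omega

lemma two_pow_mul_collatzStep_le {y c k : ℕ} (hc : c ≠ 0) (hc7 : c ≤ 7)
    (hk : 2 ^ k ∣ 3 * y + c) : (2 : ℝ) ^ k * collatzStep y c ≤ 3 * y + 7 := by
  have : 2 ^ k * collatzStep y c ≤ 3 * y + 7 :=
    calc 2 ^ k * collatzStep y c ≤ 2 ^ k * ((3 * y + c) / 2 ^ k) :=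
          Nat.mul_le_mul_left _ (collatzStep_le_div hc hk)
      _ ≤ 3 * y + c := Nat.mul_div_le _ _
      _ ≤ 3 * y + 7 := by omega
  exact_mod_cast this

lemma sqrt_le_mul_sqrt_of_pow_mul_le {s B w : ℝ} (k : ℕ) (hs : 0 ≤ s) (hw : 0 ≤ w)
    (hsB : 2 ^ k * s ≤ B) (hwk : 1 ≤ w ^ 2 * 2 ^ k) : √s ≤ w * √B := by
  rw [← Real.sqrt_sq hw, ← Real.sqrt_mul (sq_nonneg w)]
  exact Real.sqrt_le_sqrt (by nlinarith)

/-- Among `3y + 1, 3y + 3, 3y + 5, 3y + 7` one is divisible by `8`, one by `4` and all by `2`, so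
the average of `√(collatzStep y c)` is about `(√3 / 4) (√2 + 1/2 + 1/√8) √y < 0.99 √y`. -/
lemma sum_sqrt_collatzStep_le {y : ℕ} (hy : Odd y) :
    25 * ∑ c ∈ digits, √(collatzStep y c : ℝ) ≤ 99 * √(y : ℝ) + 200 := by
  set B : ℝ := 3 * y + 7
  have hbound : ∀ c k (w : ℝ), 0 < c → c ≤ 7 → 2 ^ k ∣ 3 * y + c → 0 ≤ w → 1 ≤ w ^ 2 * 2 ^ k →
      √(collatzStep y c : ℝ) ≤ w * √B := fun c k w hc hc7 hk hw hwk =>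
    sqrt_le_mul_sqrt_of_pow_mul_le k (Nat.cast_nonneg _) hw
      (two_pow_mul_collatzStep_le hc.ne' hc7 hk) hwk
  have h2 : ∀ c, 0 < c → c ≤ 7 → 2 ∣ 3 * y + c → √(collatzStep y c : ℝ) ≤ 0.7072 * √B :=
    fun c hc hc7 hk => hbound c 1 _ hc hc7 (by simpa using hk) (by norm_num) (by norm_num)
  have h4 : ∀ c, 0 < c → c ≤ 7 → 4 ∣ 3 * y + c → √(collatzStep y c : ℝ) ≤ 0.5 * √B :=
    fun c hc hc7 hk => hbound c 2 _ hc hc7 (by simpa using hk) (by norm_num) (by norm_num)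
  have h8 : ∀ c, 0 < c → c ≤ 7 → 8 ∣ 3 * y + c → √(collatzStep y c : ℝ) ≤ 0.3536 * √B :=
    fun c hc hc7 hk => hbound c 3 _ hc hc7 (by simpa using hk) (by norm_num) (by norm_num)
  have hsum : ∑ c ∈ digits, √(collatzStep y c : ℝ) ≤ 2.268 * √B := by
    rw [sum_digits]
    obtain ⟨k, rfl⟩ := hy
    rcases (by omega : k % 4 = 0 ∨ k % 4 = 1 ∨ k % 4 = 2 ∨ k % 4 = 3) with h | h | h | h
    · linarith [h4 1 one_pos (by omega) (by omega), h2 3 (by omega) (by omega) (by omega),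
        h8 5 (by omega) (by omega) (by omega), h2 7 (by omega) (by omega) (by omega)]
    · linarith [h2 1 one_pos (by omega) (by omega), h4 3 (by omega) (by omega) (by omega),
        h2 5 (by omega) (by omega) (by omega), h8 7 (by omega) (by omega) (by omega)]
    · linarith [h8 1 one_pos (by omega) (by omega), h2 3 (by omega) (by omega) (by omega),
        h4 5 (by omega) (by omega) (by omega), h2 7 (by omega) (by omega) (by omega)]
    · linarith [h2 1 one_pos (by omega) (by omega), h8 3 (by omega) (by omega) (by omega),
        h2 5 (by omega) (by omega) (by omega), h4 7 (by omega) (by omega) (by omega)]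
  have hB : √B ≤ 1.7321 * √(y : ℝ) + 2.6458 := by
    have h3 : √(3 : ℝ) ≤ 1.7321 := Real.sqrt_le_iff.mpr ⟨by norm_num, by norm_num⟩
    have h7 : √(7 : ℝ) ≤ 2.6458 := Real.sqrt_le_iff.mpr ⟨by norm_num, by norm_num⟩
    have hadd : √B ≤ √3 * √(y : ℝ) + √7 := Real.sqrt_le_iff.mpr ⟨by positivity, by
      nlinarith [Real.sq_sqrt (show (0 : ℝ) ≤ 3 by norm_num), Real.sq_sqrt (Nat.cast_nonneg y),
        Real.sq_sqrt (show (0 : ℝ) ≤ 7 by norm_num),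
        mul_nonneg (mul_nonneg (Real.sqrt_nonneg 3) (Real.sqrt_nonneg (y : ℝ)))
          (Real.sqrt_nonneg 7)]⟩
    nlinarith [Real.sqrt_nonneg (y : ℝ)]
  nlinarith [Real.sqrt_nonneg B]

lemma ofReal_sum_sqrt_collatzStep_le {y : ℕ} (hy : Odd y) :
    25 * ∑ c ∈ digits, ENNReal.ofReal √(collatzStep y c : ℝ)
      ≤ 99 * ENNReal.ofReal √(y : ℝ) + 200 := by
  rw [← ENNReal.ofReal_sum_of_nonneg fun _ _ => Real.sqrt_nonneg _]
  calc (25 : ℝ≥0∞) * ENNReal.ofReal (∑ c ∈ digits, √(collatzStep y c : ℝ))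
      = ENNReal.ofReal (25 * ∑ c ∈ digits, √(collatzStep y c : ℝ)) := by
        rw [ENNReal.ofReal_mul (by norm_num)]; norm_num
    _ ≤ ENNReal.ofReal (99 * √(y : ℝ) + 200) :=
        ENNReal.ofReal_le_ofReal (sum_sqrt_collatzStep_le hy)
    _ = 99 * ENNReal.ofReal √(y : ℝ) + 200 := by
        rw [ENNReal.ofReal_add (by positivity) (by norm_num), ENNReal.ofReal_mul (by norm_num)]
        norm_num

variable {Ω : Type*}

structure IsCollatzNoise [MeasurableSpace Ω] (μ : Measure Ω) (ξ : ℕ → Ω → ℕ) : Prop where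
  mem_digits : ∀ n ω, ξ n ω ∈ digits
  measurable : ∀ n, Measurable (ξ n)
  iIndepFun : iIndepFun ξ μ
  measure_eq : ∀ n, ∀ c ∈ digits, μ {ω | ξ n ω = c} = 4⁻¹

@[reducible] def past (ξ : ℕ → Ω → ℕ) (n : ℕ) : MeasurableSpace Ω :=
  ⨆ i ∈ Set.Iic n, MeasurableSpace.comap (ξ i) inferInstance

def chain (x : ℕ) (ξ : ℕ → Ω → ℕ) : ℕ → Ω → ℕ
  | 0 => fun _ => x
  | n + 1 => fun ω => collatzStep (chain x ξ n ω) (ξ (n + 1) ω)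

def descentRun (x : ℕ) (ξ : ℕ → Ω → ℕ) (n j : ℕ) : Set Ω :=
  {ω | ∀ i < j, ξ (n + i + 1) ω = descentDigit (chain x ξ (n + i) ω)}

def avoidsOne (x : ℕ) (ξ : ℕ → Ω → ℕ) (N M k : ℕ) : Set Ω :=
  {ω | ∀ j < k, chain x ξ (N + (j + 1) * M) ω ≠ 1}

variable {ξ : ℕ → Ω → ℕ}

lemma past_mono {m n : ℕ} (h : m ≤ n) : past ξ m ≤ past ξ n :=
  biSup_mono fun _ hi => le_trans hi h

lemma measurable_past (n : ℕ) : Measurable[past ξ n] (ξ n) :=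
  Measurable.of_comap_le (le_iSup₂ (f := fun i (_ : i ∈ Set.Iic n) =>
    MeasurableSpace.comap (ξ i) inferInstance) n Set.self_mem_Iic)

lemma measurable_chain (x n : ℕ) : Measurable[past ξ n] (chain x ξ n) := by
  induction n with
  | zero => exact measurable_const
  | succ n ih =>
    exact (Measurable.of_discrete (f := fun p : ℕ × ℕ => collatzStep p.1 p.2)).comp
      ((ih.mono (past_mono n.le_succ) le_rfl).prodMk (measurable_past (n + 1)))

lemma measurable_comp_chain {β : Type*} [MeasurableSpace β] (f : ℕ → β) (x n : ℕ) :
    Measurable[past ξ n] fun ω => f (chain x ξ n ω) :=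
  (measurable_from_nat (f := f)).comp (measurable_chain x n)

variable {x : ℕ}

lemma chain_odd (hξ : ∀ n ω, ξ n ω ∈ digits) (hx : Odd x) (n : ℕ) (ω : Ω) :
    Odd (chain x ξ n ω) := by
  induction n with
  | zero => exact hx
  | succ n _ => exact collatzStep_odd (by have := mem_digits.mp (hξ (n + 1) ω); omega)

lemma descentRun_succ (n j : ℕ) : descentRun x ξ n (j + 1)
    = {ω | ξ (n + 1) ω = descentDigit (chain x ξ n ω)} ∩ descentRun x ξ (n + 1) j := by
  ext ω
  simp only [descentRun, Set.mem_inter_iff, Set.mem_ofPred_eq, Nat.forall_lt_succ_left',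
    add_zero, add_assoc, add_comm 1]

lemma measurableSet_next_eq_descentDigit (n : ℕ) :
    MeasurableSet[past ξ (n + 1)] {ω | ξ (n + 1) ω = descentDigit (chain x ξ n ω)} :=
  measurableSet_eq_fun (measurable_past (n + 1))
    ((measurable_comp_chain descentDigit x n).mono (past_mono n.le_succ) le_rfl)

lemma chain_add_eq_iterate {n j : ℕ} {ω : Ω} (hω : ω ∈ descentRun x ξ n j) {i : ℕ}
    (hi : i ≤ j) : chain x ξ (n + i) ω = descentStep^[i] (chain x ξ n ω) := by
  induction i with
  | zero => rfl
  | succ i ih =>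
    rw [Function.iterate_succ_apply', ← ih (by omega), ← add_assoc]
    show collatzStep _ _ = collatzStep _ _
    rw [hω i (by omega)]

lemma chain_eq_one_of_mem_descentRun (hξ : ∀ n ω, ξ n ω ∈ digits) (hx : Odd x) {n M : ℕ}
    {ω : Ω} (hω : ω ∈ descentRun x ξ n M) (hM : chain x ξ n ω ≤ M) :
    chain x ξ (n + M) ω = 1 := by
  rw [chain_add_eq_iterate hω le_rfl]
  exact descentStep_iterate_eq_one (chain_odd hξ hx n ω) (by omega)

lemma avoidsOne_succ (N M k : ℕ) : avoidsOne x ξ N M (k + 1)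
    = avoidsOne x ξ N M k ∩ {ω | chain x ξ (N + k * M + M) ω ≠ 1} := by
  ext ω
  simp only [avoidsOne, Nat.forall_lt_succ_right, Set.mem_inter_iff, Set.mem_ofPred_eq,
    add_one_mul, add_assoc]

lemma measurableSet_avoidsOne (N M k : ℕ) :
    MeasurableSet[past ξ (N + k * M)] (avoidsOne x ξ N M k) := by
  induction k with
  | zero => simp [avoidsOne]
  | succ k ih =>
    rw [avoidsOne_succ, show N + (k + 1) * M = N + k * M + M by ring]
    exact (past_mono (by omega) _ ih).inter
      (measurable_chain x _ (measurableSet_singleton 1)).compl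

variable [MeasurableSpace Ω] {μ : Measure Ω}

lemma past_le (hξ : ∀ n, Measurable (ξ n)) (n : ℕ) : past ξ n ≤ ‹MeasurableSpace Ω› :=
  iSup₂_le fun i _ => (hξ i).comap_le

lemma indep_past_next (hξ : ∀ n, Measurable (ξ n)) (hind : iIndepFun ξ μ) (n : ℕ) :
    Indep (past ξ n) (MeasurableSpace.comap (ξ (n + 1)) inferInstance) μ := by
  have := indep_iSup_of_disjoint (fun i => (hξ i).comap_le)
    ((iIndepFun_iff_iIndep _ _ _).mp hind) (S := Set.Iic n) (T := {n + 1}) (by simp)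
  rwa [iSup_singleton] at this

lemma measurable_sqrt_chain (hξ : ∀ n, Measurable (ξ n)) (x n : ℕ) :
    Measurable fun ω => ENNReal.ofReal √(chain x ξ n ω : ℝ) :=
  (measurable_comp_chain (fun y : ℕ => ENNReal.ofReal √(y : ℝ)) x n).mono (past_le hξ n) le_rfl

lemma lintegral_apply_next (hξ : IsCollatzNoise μ ξ) (n : ℕ) {G : ℕ → Ω → ℝ≥0∞}
    (hG : ∀ c, Measurable[past ξ n] (G c)) :
    4 * ∫⁻ ω, G (ξ (n + 1) ω) ω ∂μ = ∫⁻ ω, ∑ c ∈ digits, G c ω ∂μ := by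
  set E : ℕ → Set Ω := fun c => ξ (n + 1) ⁻¹' {c}
  have hE : ∀ c, MeasurableSet[MeasurableSpace.comap (ξ (n + 1)) inferInstance] (E c) :=
    fun c => comap_measurable _ (measurableSet_singleton c)
  have hGm : ∀ c, Measurable (G c) := fun c => (hG c).mono (past_le hξ.measurable n) le_rfl
  have hpt : ∀ ω, G (ξ (n + 1) ω) ω = ∑ c ∈ digits, G c ω * (E c).indicator 1 ω := by
    intro ω
    rw [Finset.sum_eq_single_of_mem _ (hξ.mem_digits (n + 1) ω) fun c _ hc => by
      simp [E, Ne.symm hc]]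
    simp [E]
  have hfactor : ∀ c ∈ digits,
      ∫⁻ ω, G c ω * (E c).indicator 1 ω ∂μ = (∫⁻ ω, G c ω ∂μ) * 4⁻¹ := by
    intro c hc
    rw [lintegral_mul_eq_lintegral_mul_lintegral_of_independent_measurableSpace
      (past_le hξ.measurable n) (hξ.measurable (n + 1)).comap_le
      (indep_past_next hξ.measurable hξ.iIndepFun n) (hG c)
      (Measurable.indicator (f := 1) measurable_const (hE c)),
      lintegral_indicator_one ((hξ.measurable (n + 1)) (measurableSet_singleton c)),
      ← hξ.measure_eq (n + 1) c hc]
    rfl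
  calc 4 * ∫⁻ ω, G (ξ (n + 1) ω) ω ∂μ
      = 4 * ∑ c ∈ digits, (∫⁻ ω, G c ω ∂μ) * 4⁻¹ := by
        simp_rw [hpt]
        rw [lintegral_finsetSum _ (f := fun c ω => G c ω * (E c).indicator 1 ω) fun c _ =>
          (hGm c).mul (measurable_one.indicator
            ((hξ.measurable (n + 1)) (measurableSet_singleton c))),
          Finset.sum_congr rfl hfactor]
    _ = ∫⁻ ω, ∑ c ∈ digits, G c ω ∂μ := by
        rw [lintegral_finsetSum _ fun c _ => hGm c, ← Finset.sum_mul, mul_comm, mul_assoc,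
          ENNReal.inv_mul_cancel (by norm_num) (by norm_num), mul_one]

lemma measure_inter_next_eq (hξ : IsCollatzNoise μ ξ) {n : ℕ} {A : Set Ω}
    (hA : MeasurableSet[past ξ n] A) {F : Ω → ℕ} (hF : Measurable[past ξ n] F)
    (hFd : ∀ ω, F ω ∈ digits) :
    4 * μ (A ∩ {ω | ξ (n + 1) ω = F ω}) = μ A := by
  have hpast := past_le hξ.measurable n
  have hnext := lintegral_apply_next hξ n (G := fun c => (A ∩ {ω | c = F ω}).indicator 1)
    fun c => measurable_const.indicator (hA.inter (measurableSet_eq_fun measurable_const hF))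
  have hsum : ∀ ω, ∑ c ∈ digits, (A ∩ {ω | c = F ω}).indicator 1 ω
      = A.indicator (1 : Ω → ℝ≥0∞) ω := by
    intro ω
    rw [Finset.sum_eq_single_of_mem _ (hFd ω) fun c _ hc => by simp [hc]]
    by_cases hω : ω ∈ A <;> simp [hω]
  simp_rw [hsum, lintegral_indicator_one (hpast _ hA)] at hnext
  rw [← hnext, ← lintegral_indicator_one
    ((hpast _ hA).inter (measurableSet_eq_fun (hξ.measurable _) (hF.mono hpast le_rfl)))]
  rfl

lemma measure_inter_descentRun (hξ : IsCollatzNoise μ ξ) (hx : Odd x) (j : ℕ) :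
    ∀ n {A : Set Ω}, MeasurableSet[past ξ n] A → 4 ^ j * μ (A ∩ descentRun x ξ n j) = μ A := by
  induction j with
  | zero => intro n A _; simp [descentRun]
  | succ j ih =>
    intro n A hA
    rw [descentRun_succ, ← Set.inter_assoc, pow_succ', mul_assoc,
      ih (n + 1) ((past_mono n.le_succ _ hA).inter (measurableSet_next_eq_descentDigit n))]
    exact measure_inter_next_eq hξ hA (measurable_comp_chain descentDigit x n)
      fun ω => descentDigit_mem_digits (chain_odd hξ.mem_digits hx n ω)

variable [IsProbabilityMeasure μ]

lemma lintegral_sqrt_chain_succ_le (hξ : IsCollatzNoise μ ξ) (hx : Odd x) (n : ℕ) :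
    100 * ∫⁻ ω, ENNReal.ofReal √(chain x ξ (n + 1) ω : ℝ) ∂μ
      ≤ 99 * ∫⁻ ω, ENNReal.ofReal √(chain x ξ n ω : ℝ) ∂μ + 200 := by
  have hnext := lintegral_apply_next hξ n
    (G := fun c ω => ENNReal.ofReal √(collatzStep (chain x ξ n ω) c : ℝ))
    fun c => measurable_comp_chain (fun y => ENNReal.ofReal √(collatzStep y c : ℝ)) x n
  calc 100 * ∫⁻ ω, ENNReal.ofReal √(chain x ξ (n + 1) ω : ℝ) ∂μ
      = 25 * ∫⁻ ω, ∑ c ∈ digits, ENNReal.ofReal √(collatzStep (chain x ξ n ω) c : ℝ) ∂μ := by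
        rw [← hnext, ← mul_assoc]; norm_num; rfl
    _ = ∫⁻ ω, 25 * ∑ c ∈ digits, ENNReal.ofReal √(collatzStep (chain x ξ n ω) c : ℝ) ∂μ :=
        (lintegral_const_mul _ ((measurable_comp_chain
          (fun y => ∑ c ∈ digits, ENNReal.ofReal √(collatzStep y c : ℝ)) x n).mono
            (past_le hξ.measurable n) le_rfl)).symm
    _ ≤ ∫⁻ ω, (99 * ENNReal.ofReal √(chain x ξ n ω : ℝ) + 200) ∂μ :=
        lintegral_mono fun ω => ofReal_sum_sqrt_collatzStep_le (chain_odd hξ.mem_digits hx n ω)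
    _ = 99 * ∫⁻ ω, ENNReal.ofReal √(chain x ξ n ω : ℝ) ∂μ + 200 := by
        rw [lintegral_add_right _ measurable_const,
          lintegral_const_mul _ (measurable_sqrt_chain hξ.measurable x n)]
        simp

lemma lintegral_sqrt_chain_le (hξ : IsCollatzNoise μ ξ) (hx : Odd x) (n : ℕ) :
    ∫⁻ ω, ENNReal.ofReal √(chain x ξ n ω : ℝ) ∂μ ≤ ENNReal.ofReal √(x : ℝ) + 200 := by
  induction n with
  | zero => simp [chain]
  | succ n ih =>
    refine (ENNReal.mul_le_mul_iff_right (a := 100) (by norm_num) (by norm_num)).mp ?_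
    calc 100 * ∫⁻ ω, ENNReal.ofReal √(chain x ξ (n + 1) ω : ℝ) ∂μ
        ≤ 99 * (ENNReal.ofReal √(x : ℝ) + 200) + 200 :=
          (lintegral_sqrt_chain_succ_le hξ hx n).trans (by gcongr)
      _ ≤ 100 * (ENNReal.ofReal √(x : ℝ) + 200) := by
          rw [show (100 : ℝ≥0∞) = 99 + 1 by norm_num, add_mul, one_mul]
          gcongr
          exact le_add_self

lemma measureReal_lt_chain_le (hξ : IsCollatzNoise μ ξ) (hx : Odd x) {M : ℕ} (hM : 0 < M)
    (n : ℕ) : μ.real {ω | M < chain x ξ n ω} ≤ (√(x : ℝ) + 200) / √(M : ℝ) := by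
  have hMpos : 0 < √(M : ℝ) := Real.sqrt_pos.mpr (by exact_mod_cast hM)
  refine ENNReal.toReal_le_of_le_ofReal (by positivity) ?_
  calc μ {ω | M < chain x ξ n ω}
      ≤ μ {ω | ENNReal.ofReal √(M : ℝ) ≤ ENNReal.ofReal √(chain x ξ n ω : ℝ)} :=
        measure_mono fun ω hω => ENNReal.ofReal_le_ofReal
          (Real.sqrt_le_sqrt (by exact_mod_cast hω.le))
    _ ≤ (∫⁻ ω, ENNReal.ofReal √(chain x ξ n ω : ℝ) ∂μ) / ENNReal.ofReal √(M : ℝ) :=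
        meas_ge_le_lintegral_div (measurable_sqrt_chain hξ.measurable x n).aemeasurable
          (ENNReal.ofReal_pos.mpr hMpos).ne' ENNReal.ofReal_ne_top
    _ ≤ (ENNReal.ofReal √(x : ℝ) + 200) / ENNReal.ofReal √(M : ℝ) := by
        gcongr; exact lintegral_sqrt_chain_le hξ hx n
    _ = ENNReal.ofReal ((√(x : ℝ) + 200) / √(M : ℝ)) := by
        rw [ENNReal.ofReal_div_of_pos hMpos, ENNReal.ofReal_add (by positivity) (by norm_num)]
        norm_num

lemma measureReal_inter_chain_ne_one_le (hξ : IsCollatzNoise μ ξ) (hx : Odd x) {n M : ℕ}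
    {A : Set Ω} (hA : MeasurableSet[past ξ n] A) {ε : ℝ}
    (hε : μ.real {ω | M < chain x ξ n ω} ≤ ε) :
    μ.real (A ∩ {ω | chain x ξ (n + M) ω ≠ 1})
      ≤ (1 - (4 ^ M)⁻¹) * μ.real A + (4 ^ M)⁻¹ * ε := by
  have hpast := past_le hξ.measurable n
  set B := A ∩ {ω | chain x ξ n ω ≤ M}
  set H := B ∩ descentRun x ξ n M
  have hB : MeasurableSet[past ξ n] B := hA.inter (measurable_chain x n measurableSet_Iic)
  have hH : μ.real H = (4 ^ M)⁻¹ * μ.real B := by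
    rw [measureReal_def, measureReal_def, ← measure_inter_descentRun hξ hx M n hB,
      ENNReal.toReal_mul, ENNReal.toReal_pow, ENNReal.toReal_ofNat,
      inv_mul_cancel_left₀ (by positivity)]
  have hdisj : Disjoint H (A ∩ {ω | chain x ξ (n + M) ω ≠ 1}) :=
    Set.disjoint_left.mpr fun ω hω hω' =>
      hω'.2 (chain_eq_one_of_mem_descentRun hξ.mem_digits hx hω.2 hω.1.2)
  have hsplit : μ.real H + μ.real (A ∩ {ω | chain x ξ (n + M) ω ≠ 1}) ≤ μ.real A := by
    rw [← measureReal_union hdisj ((hpast _ hA).inter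
      ((measurable_chain x (n + M)).mono (past_le hξ.measurable _) le_rfl
        (measurableSet_singleton 1)).compl)]
    exact measureReal_mono (Set.union_subset (fun ω hω => hω.1.1) Set.inter_subset_left)
  have hA_le : μ.real A ≤ μ.real B + ε := by
    refine (measureReal_mono fun ω hω => ?_).trans
      ((measureReal_union_le B {ω | M < chain x ξ n ω}).trans (add_le_add le_rfl hε))
    by_cases h : chain x ξ n ω ≤ M
    · exact Or.inl ⟨hω, h⟩
    · exact Or.inr (not_le.mp h)
  have hδ : 0 ≤ ((4 : ℝ) ^ M)⁻¹ := by positivity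
  nlinarith [mul_le_mul_of_nonneg_left hA_le hδ]

lemma measureReal_avoidsOne_le (hξ : IsCollatzNoise μ ξ) (hx : Odd x) {N M : ℕ} {ε : ℝ}
    (hε : ∀ n, μ.real {ω | M < chain x ξ n ω} ≤ ε) (k : ℕ) :
    μ.real (avoidsOne x ξ N M k) ≤ (1 - (4 ^ M)⁻¹) ^ k + ε := by
  induction k with
  | zero =>
    rw [pow_zero]
    exact measureReal_le_one.trans (le_add_of_nonneg_right (measureReal_nonneg.trans (hε 0)))
  | succ k ih =>
    have hδ : ((4 : ℝ) ^ M)⁻¹ ≤ 1 := inv_le_one_of_one_le₀ (one_le_pow₀ (by norm_num))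
    rw [avoidsOne_succ]
    calc _ ≤ (1 - (4 ^ M)⁻¹) * μ.real (avoidsOne x ξ N M k) + (4 ^ M)⁻¹ * ε :=
          measureReal_inter_chain_ne_one_le hξ hx (measurableSet_avoidsOne N M k) (hε _)
      _ ≤ (1 - (4 ^ M)⁻¹) * ((1 - (4 ^ M)⁻¹) ^ k + ε) + (4 ^ M)⁻¹ * ε := by gcongr
      _ = (1 - (4 ^ M)⁻¹) ^ (k + 1) + ε := by ring

lemma measure_forall_chain_ne_one (hξ : IsCollatzNoise μ ξ) (hx : Odd x) (N : ℕ) :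
    μ {ω | ∀ n ≥ N, chain x ξ n ω ≠ 1} = 0 := by
  set Bad := {ω | ∀ n ≥ N, chain x ξ n ω ≠ 1}
  have hbound : ∀ M : ℕ, 0 < M → μ.real Bad ≤ (√(x : ℝ) + 200) / √(M : ℝ) := by
    intro M hM
    have hδ : 0 < ((4 : ℝ) ^ M)⁻¹ := by positivity
    have hδ1 : ((4 : ℝ) ^ M)⁻¹ ≤ 1 := inv_le_one_of_one_le₀ (one_le_pow₀ (by norm_num))
    have hgeom : Tendsto (fun k => (1 - ((4 : ℝ) ^ M)⁻¹) ^ k + (√(x : ℝ) + 200) / √(M : ℝ))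
        atTop (𝓝 ((√(x : ℝ) + 200) / √(M : ℝ))) := by
      simpa using (tendsto_pow_atTop_nhds_zero_of_lt_one (by linarith) (by linarith)).add_const
        ((√(x : ℝ) + 200) / √(M : ℝ))
    refine ge_of_tendsto' hgeom fun k => ?_
    exact (measureReal_mono (s₁ := Bad) (s₂ := avoidsOne x ξ N M k) fun ω hω j _ =>
      hω _ (Nat.le_add_right _ _)).trans
      (measureReal_avoidsOne_le (N := N) hξ hx (measureReal_lt_chain_le hξ hx hM) k)
  have hlim : Tendsto (fun M : ℕ => (√(x : ℝ) + 200) / √(M : ℝ)) atTop (𝓝 0) :=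
    tendsto_const_nhds.div_atTop (Real.tendsto_sqrt_atTop.comp tendsto_natCast_atTop_atTop)
  exact (measureReal_eq_zero_iff).mp (le_antisymm
    (ge_of_tendsto hlim ((eventually_gt_atTop 0).mono hbound)) measureReal_nonneg)

end RandomCollatz

theorem stmt_13_general
    {Ω : Type*} [MeasurableSpace Ω] (μ : MeasureTheory.Measure Ω)
    [MeasureTheory.IsProbabilityMeasure μ]
    (ξ : ℕ → Ω → ℕ)
    (hξval : ∀ n ω, ξ n ω = 1 ∨ ξ n ω = 3 ∨ ξ n ω = 5 ∨ ξ n ω = 7)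
    (hξmeas : ∀ n, Measurable (ξ n))
    (hξindep : ProbabilityTheory.iIndepFun ξ μ)
    (hξdist : ∀ n, μ {ω | ξ n ω = 1} = 1/4 ∧ μ {ω | ξ n ω = 3} = 1/4 ∧
      μ {ω | ξ n ω = 5} = 1/4 ∧ μ {ω | ξ n ω = 7} = 1/4)
    (x : ℕ) (hx : Odd x)
    (X : ℕ → Ω → ℕ)
    (hX0 : ∀ ω, X 0 ω = x)
    (hXrec : ∀ n ω, X (n + 1) ω =
      (3 * X n ω + ξ (n + 1) ω) / 2 ^ padicValNat 2 (3 * X n ω + ξ (n + 1) ω)) :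
    ∀ᵐ ω ∂μ, ∃ᶠ n in Filter.atTop, X n ω = 1 := by
  have hξ : RandomCollatz.IsCollatzNoise μ ξ :=
    { mem_digits := fun n ω => RandomCollatz.mem_digits.mpr (hξval n ω)
      measurable := hξmeas
      iIndepFun := hξindep
      measure_eq := fun n c hc => by
        obtain ⟨h1, h3, h5, h7⟩ := hξdist n
        rw [← one_div]
        rcases RandomCollatz.mem_digits.mp hc with rfl | rfl | rfl | rfl <;> assumption }
  have hX : X = RandomCollatz.chain x ξ := by
    funext n ω
    induction n with
    | zero => exact hX0 ω
    | succ n ih => rw [hXrec, ih, ← RandomCollatz.collatzStep_eq_div_padicValNat]; rfl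
  subst hX
  simp_rw [Filter.frequently_atTop]
  refine MeasureTheory.ae_all_iff.mpr fun N => MeasureTheory.ae_iff.mpr ?_
  simpa using RandomCollatz.measure_forall_chain_ne_one hξ hx N

/-- (Proposition 2, recurrence part) For the randomized Collatz chain started at any
positive odd integer `x`, almost surely `Xₙ = 1` for infinitely many `n`. -/
theorem stmt_13
    {Ω : Type*} [MeasurableSpace Ω] (μ : MeasureTheory.Measure Ω)
    [MeasureTheory.IsProbabilityMeasure μ]
    (ξ : ℕ → Ω → ℕ)
    (hξval : ∀ n ω, ξ n ω = 1 ∨ ξ n ω = 3 ∨ ξ n ω = 5 ∨ ξ n ω = 7)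
    (hξmeas : ∀ n, Measurable (ξ n))
    (hξindep : ProbabilityTheory.iIndepFun ξ μ)
    (hξdist : ∀ n, μ {ω | ξ n ω = 1} = 1/4 ∧ μ {ω | ξ n ω = 3} = 1/4 ∧
      μ {ω | ξ n ω = 5} = 1/4 ∧ μ {ω | ξ n ω = 7} = 1/4)
    (x : ℕ) (hx : Odd x) (hxpos : 0 < x)
    (X : ℕ → Ω → ℕ)
    (hX0 : ∀ ω, X 0 ω = x)
    (hXrec : ∀ n ω, X (n + 1) ω =
      (3 * X n ω + ξ (n + 1) ω) / 2 ^ padicValNat 2 (3 * X n ω + ξ (n + 1) ω))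
    (d : ℕ → Ω → ℕ)
    (hd : ∀ n ω, d (n + 1) ω = padicValNat 2 (3 * X n ω + ξ (n + 1) ω)) :
    ∀ᵐ ω ∂μ, ∃ᶠ n in Filter.atTop, X n ω = 1 :=
  stmt_13_general μ ξ hξval hξmeas hξindep hξdist x hx X hX0 hXrec
end
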